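/- arXiv:1806.05347 — 6 statements merged into one kernel-verified Lean document; each statement's English description precedes it below -/
import Mathlib

section
/- For all positive integers r and k with k ≤ (2r+1)/3, there exists a (2r+1)-regular multigraph with exactly 2r+4−3k cut-edges that has no 2k-factor. Hence the bound 2r−3(k−1) on the number of cut-edges guaranteeing a 2k-factor in a (2r+1)-regular multigraph is sharp. -/
open scoped Classical
noncomputable section

structure Multigraph (V : Type) (E : Type) where
  inc : E → Sym2 V

namespace Multigraph

variable {V E : Type}

/-- The number of times vertex `v` occurs as an endpoint of the unordered pair `s`
(a loop at `v` counts twice). -/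
def endCount (v : V) (s : Sym2 V) : ℕ :=
  Sym2.lift ⟨fun a b => (if a = v then 1 else 0) + (if b = v then 1 else 0),
    fun _ _ => add_comm _ _⟩ s

/-- The degree of a vertex in a multigraph (a loop contributes 2). -/
def degree [Fintype E] (G : Multigraph V E) (v : V) : ℕ :=
  ∑ e : E, endCount v (G.inc e)

/-- `G` has a spanning `ℓ`-regular subgraph (a set of edges giving each vertex degree `ℓ`). -/
def HasFactor [Fintype E] (G : Multigraph V E) (ℓ : ℕ) : Prop :=
  ∃ F : Finset E, ∀ v : V, ∑ e ∈ F, endCount v (G.inc e) = ℓ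

/-- One step along an edge not in `A`. -/
def Step (G : Multigraph V E) (A : Set E) (x y : V) : Prop :=
  ∃ e : E, e ∉ A ∧ G.inc e = s(x, y)

/-- The number of connected components of `G` after deleting the edges in `A`. -/
def numComponents (G : Multigraph V E) (A : Set E) : ℕ :=
  Nat.card (Quot (G.Step A))

/-- An edge is a cut-edge if deleting it increases the number of components. -/
def IsCutEdge (G : Multigraph V E) (e : E) : Prop :=
  G.numComponents ∅ < G.numComponents {e}

/-- The number of cut-edges of `G`. -/
def cutEdgeCount (G : Multigraph V E) : ℕ :=
  Nat.card {e : E // G.IsCutEdge e}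

/-- `‖A,B‖`: the number of edges with one endpoint in `A` and the other in `B`
(for disjoint `A` and `B`). -/
def edgesBetween (G : Multigraph V E) (A B : Set V) : ℕ :=
  Nat.card {e : E // ∃ a ∈ A, ∃ b ∈ B, G.inc e = s(a, b)}

/-- The degree of `v` in `G − S` (only edges with no endpoint in `S` count). -/
def degreeAvoid [Fintype E] (G : Multigraph V E) (S : Set V) (v : V) : ℕ :=
  ∑ e : E, if ∀ u ∈ S, ¬ u ∈ G.inc e then endCount v (G.inc e) else 0

/-- `d_{G−S}(T)`: the sum over `v ∈ T` of the degree of `v` in `G − S`. -/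
def degSumAvoid [Fintype V] [Fintype E] (G : Multigraph V E) (S T : Set V) : ℕ :=
  ∑ v : V, if v ∈ T then G.degreeAvoid S v else 0

/-- One step inside the vertex set `R`. -/
def StepIn (G : Multigraph V E) (R : Set V) (x y : V) : Prop :=
  x ∈ R ∧ y ∈ R ∧ ∃ e : E, G.inc e = s(x, y)

/-- Reachability within the vertex set `R`. -/
def ReachIn (G : Multigraph V E) (R : Set V) : V → V → Prop :=
  Relation.ReflTransGen (G.StepIn R)

/-- The component of `v` in the submultigraph induced by `R`. -/
def componentIn (G : Multigraph V E) (R : Set V) (v : V) : Set V :=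
  {w | G.ReachIn R v w}

/-- `C` is (the vertex set of) a component of the submultigraph induced by `R`. -/
def IsCompOf (G : Multigraph V E) (R : Set V) (C : Set V) : Prop :=
  ∃ v ∈ R, C = G.componentIn R v

/-- `q(S,T)`: the number of components `Q` of `G − S − T` with `‖V(Q),T‖` odd. -/
def oddComps (G : Multigraph V E) (S T : Set V) : ℕ :=
  Nat.card {C : Set V // G.IsCompOf ((S ∪ T)ᶜ) C ∧ Odd (G.edgesBetween C T)}

end Multigraph

namespace Multigraph
variable {V E : Type}

lemma endCount_mk (v a b : V) :
    endCount v s(a, b) = (if a = v then 1 else 0) + (if b = v then 1 else 0) := by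
  simp [endCount]

lemma quot_step_eq (G : Multigraph V E) {A : Set E} {x y : V} (e : E) (he : e ∉ A)
    (h : G.inc e = s(x, y)) : Quot.mk (G.Step A) x = Quot.mk (G.Step A) y :=
  Quot.sound ⟨e, he, h⟩

lemma numComponents_eq_one (G : Multigraph V E) (A : Set E) (u : V)
    (h : ∀ v, Quot.mk (G.Step A) v = Quot.mk (G.Step A) u) :
    G.numComponents A = 1 := by
  rw [Multigraph.numComponents, Nat.card_eq_one_iff_unique]
  refine ⟨⟨fun a b => ?_⟩, ⟨Quot.mk _ u⟩⟩
  obtain ⟨a, rfl⟩ := Quot.exists_rep a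
  obtain ⟨b, rfl⟩ := Quot.exists_rep b
  rw [h a, h b]

lemma numComponents_eq_two (G : Multigraph V E) (A : Set E) (f : V → Bool) (a b : V)
    (hfa : f a = false) (hfb : f b = true)
    (hstep : ∀ x y, G.Step A x y → f x = f y)
    (hcl : ∀ v, Quot.mk (G.Step A) v
      = if f v then Quot.mk (G.Step A) b else Quot.mk (G.Step A) a) :
    G.numComponents A = 2 := by
  rw [Multigraph.numComponents]
  have e : Quot (G.Step A) ≃ Bool :=
    { toFun := Quot.lift f hstep
      invFun := fun x => if x then Quot.mk _ b else Quot.mk _ a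
      left_inv := by
        intro q
        obtain ⟨v, rfl⟩ := Quot.exists_rep q
        exact (hcl v).symm
      right_inv := by intro x; cases x <;> simp [hfa, hfb] }
  rw [Nat.card_congr e, Nat.card_eq_fintype_card]
  simp


end Multigraph

namespace SharpAux
open Multigraph

open Multigraph

/-- vertices: hub `none`, pendant vertices `some (inl i)`, triple vertices `some (inr j)` -/
abbrev Vt (r k : ℕ) : Type := Option (Fin (2*r+4-3*k) ⊕ Fin (k-1))

/-- edges: bridges, pendant loops, triple edges, triple loops -/
abbrev Et (r k : ℕ) : Type :=
  (Fin (2*r+4-3*k) ⊕ (Fin (2*r+4-3*k) × Fin r)) ⊕ ((Fin (k-1) × Fin 3) ⊕ (Fin (k-1) × Fin (r-1)))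

def Gg (r k : ℕ) : Multigraph (Vt r k) (Et r k) where
  inc e := match e with
    | .inl (.inl i) => s((none : Vt r k), some (.inl i))
    | .inl (.inr (i, _)) => s(some (.inl i), some (.inl i))
    | .inr (.inl (j, _)) => s((none : Vt r k), some (.inr j))
    | .inr (.inr (j, _)) => s(some (.inr j), some (.inr j))

variable (r k : ℕ)

lemma sum_sum_delta {n : ℕ} (m : ℕ) (i : Fin n) :
    (∑ x : Fin n, ∑ _ : Fin m, ((if x = i then (1:ℕ) else 0) + if x = i then 1 else 0)) = 2 * m := by
  have h : ∀ x : Fin n, (∑ _ : Fin m, ((if x = i then (1:ℕ) else 0) + if x = i then 1 else 0))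
      = if x = i then 2 * m else 0 := by
    intro x; split_ifs with h <;> simp [Finset.sum_const, Finset.card_univ, mul_comm, h]
  rw [Finset.sum_congr rfl (fun x _ => h x)]
  simp [Finset.sum_ite_eq']

lemma card_filter_fst {n m : ℕ} (j : Fin n) :
    (Finset.filter (fun x : Fin n × Fin m => x.1 = j) Finset.univ).card = m := by
  rw [Finset.card_filter]
  rw [Fintype.sum_prod_type]
  have h : ∀ x : Fin n, (∑ _ : Fin m, (if x = j then (1:ℕ) else 0)) = if x = j then m else 0 := by
    intro x; split_ifs with h <;> simp [Finset.sum_const, Finset.card_univ, h]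
  rw [Finset.sum_congr rfl (fun x _ => h x)]
  simp [Finset.sum_ite_eq']

lemma deg_hub : (Gg r k).degree none = (2*r+4-3*k) + 3 * (k-1) := by
  rw [Multigraph.degree]
  rw [Fintype.sum_sum_type]
  rw [Fintype.sum_sum_type, Fintype.sum_sum_type]
  simp [Gg, endCount_mk, Fintype.sum_prod_type, Finset.card_univ, mul_comm]

lemma deg_pendant (i : Fin (2*r+4-3*k)) :
    (Gg r k).degree (some (.inl i)) = 1 + 2 * r := by
  rw [Multigraph.degree, Fintype.sum_sum_type, Fintype.sum_sum_type, Fintype.sum_sum_type]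
  simp [Gg, endCount_mk, Fintype.sum_prod_type, Finset.sum_ite_eq, Finset.card_univ,
    Finset.sum_ite_eq', two_mul, sum_sum_delta, card_filter_fst]

lemma deg_triple (j : Fin (k-1)) :
    (Gg r k).degree (some (.inr j)) = 3 + 2 * (r-1) := by
  rw [Multigraph.degree, Fintype.sum_sum_type, Fintype.sum_sum_type, Fintype.sum_sum_type]
  simp [Gg, endCount_mk, Fintype.sum_prod_type, Finset.sum_ite_eq, Finset.card_univ,
    Finset.sum_ite_eq', two_mul, sum_sum_delta, card_filter_fst]


lemma bri_ne (i : Fin (2*r+4-3*k)) (e : Et r k)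
    (he : ∀ i', e ≠ Sum.inl (Sum.inl i')) : (Sum.inl (Sum.inl i) : Et r k) ∉ ({e} : Set (Et r k)) := by
  simp only [Set.mem_singleton_iff]
  intro h; exact he i h.symm

lemma quot_all_none (A : Set (Et r k))
    (hA : ∀ i, (Sum.inl (Sum.inl i) : Et r k) ∉ A)
    (hA2 : ∀ j, ∃ a, (Sum.inr (Sum.inl (j, a)) : Et r k) ∉ A) :
    ∀ v : Vt r k, Quot.mk ((Gg r k).Step A) v = Quot.mk _ (none : Vt r k) := by
  intro v
  match v with
  | none => rfl
  | some (.inl i) => exact ((Gg r k).quot_step_eq (Sum.inl (Sum.inl i)) (hA i) rfl).symm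
  | some (.inr j) =>
      obtain ⟨a, ha⟩ := hA2 j
      exact ((Gg r k).quot_step_eq (Sum.inr (Sum.inl (j, a))) ha rfl).symm

lemma numComp_empty : (Gg r k).numComponents ∅ = 1 := by
  refine (Gg r k).numComponents_eq_one ∅ none (quot_all_none r k ∅ (by simp) (fun j => ⟨0, by simp⟩))

lemma numComp_nonbridge (e : Et r k) (he : ∀ i, e ≠ Sum.inl (Sum.inl i)) :
    (Gg r k).numComponents {e} = 1 := by
  refine (Gg r k).numComponents_eq_one {e} none (quot_all_none r k {e} ?_ ?_)
  · intro i; exact bri_ne r k i e he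
  · intro j
    match e with
    | .inl (.inl i') => exact absurd rfl (he i')
    | .inl (.inr p) => exact ⟨0, by simp⟩
    | .inr (.inr p) => exact ⟨0, by simp⟩
    | .inr (.inl (j0, a0)) =>
        refine ⟨if a0 = 0 then 1 else 0, ?_⟩
        simp only [Set.mem_singleton_iff]
        intro h
        have h2 : (j, if a0 = 0 then (1 : Fin 3) else 0) = (j0, a0) := by
          have := Sum.inl.inj (Sum.inr.inj h.symm); exact this.symm ▸ rfl
        have : (if a0 = 0 then (1 : Fin 3) else 0) = a0 := (Prod.mk.injEq _ _ _ _ ▸ h2).2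
        split_ifs at this with hh
        · rw [hh] at this; exact absurd this (by decide)
        · exact hh this.symm

lemma numComp_bridge (i : Fin (2*r+4-3*k)) :
    (Gg r k).numComponents {Sum.inl (Sum.inl i)} = 2 := by
  refine (Gg r k).numComponents_eq_two {Sum.inl (Sum.inl i)}
    (fun v => decide (v = some (.inl i))) none (some (.inl i)) (by simp) (by simp) ?_ ?_
  · rintro x y ⟨e, he, hinc⟩
    match e with
    | .inl (.inl i') =>
        have hne : i' ≠ i := by
          intro h; subst h; exact he rfl
        have hinc' : s((none : Vt r k), some (.inl i')) = s(x, y) := hinc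
        rcases Sym2.eq_iff.mp hinc' with ⟨h1, h2⟩ | ⟨h1, h2⟩ <;>
          (subst h1; subst h2; simp [hne])
    | .inl (.inr (i', a)) =>
        have hinc' : s((some (.inl i') : Vt r k), some (.inl i')) = s(x, y) := hinc
        rcases Sym2.eq_iff.mp hinc' with ⟨h1, h2⟩ | ⟨h1, h2⟩ <;> (subst h1; subst h2; rfl)
    | .inr (.inl (j, a)) =>
        have hinc' : s((none : Vt r k), some (.inr j)) = s(x, y) := hinc
        rcases Sym2.eq_iff.mp hinc' with ⟨h1, h2⟩ | ⟨h1, h2⟩ <;> (subst h1; subst h2; simp)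
    | .inr (.inr (j, a)) =>
        have hinc' : s((some (.inr j) : Vt r k), some (.inr j)) = s(x, y) := hinc
        rcases Sym2.eq_iff.mp hinc' with ⟨h1, h2⟩ | ⟨h1, h2⟩ <;> (subst h1; subst h2; rfl)
  · intro v
    match v with
    | none => simp
    | some (.inl i') =>
        by_cases h : i' = i
        · subst h; simp
        · have : (Sum.inl (Sum.inl i') : Et r k) ∉ ({Sum.inl (Sum.inl i)} : Set (Et r k)) := by
            simp only [Set.mem_singleton_iff]
            intro hh
            exact h (by injection (Sum.inl.inj hh))
          simp only [decide_eq_true_eq]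
          rw [if_neg (by simp [h])]
          exact ((Gg r k).quot_step_eq _ this rfl).symm
    | some (.inr j) =>
        have : (Sum.inr (Sum.inl (j, 0)) : Et r k) ∉ ({Sum.inl (Sum.inl i)} : Set (Et r k)) := by simp
        rw [if_neg (by simp)]
        exact ((Gg r k).quot_step_eq _ this rfl).symm

lemma cutEdge_iff (e : Et r k) :
    (Gg r k).IsCutEdge e ↔ ∃ i, e = Sum.inl (Sum.inl i) := by
  constructor
  · intro h
    by_contra hc
    push_neg at hc
    have h1 := numComp_nonbridge r k e (fun i => hc i)
    rw [Multigraph.IsCutEdge, numComp_empty, h1] at h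
    exact lt_irrefl _ h
  · rintro ⟨i, rfl⟩
    rw [Multigraph.IsCutEdge, numComp_empty, numComp_bridge]
    omega

lemma cutEdgeCount_eq : (Gg r k).cutEdgeCount = 2*r+4-3*k := by
  rw [Multigraph.cutEdgeCount]
  have e1 : Fin (2*r+4-3*k) ≃ {e : Et r k // (Gg r k).IsCutEdge e} := by
    refine Equiv.ofBijective (fun i => ⟨Sum.inl (Sum.inl i), (cutEdge_iff r k _).mpr ⟨i, rfl⟩⟩) ⟨?_, ?_⟩
    · intro a b h
      simpa using h
    · rintro ⟨e, he⟩
      obtain ⟨i, rfl⟩ := (cutEdge_iff r k e).mp he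
      exact ⟨i, rfl⟩
  rw [Nat.card_congr e1.symm]
  simp

lemma ite_swap (P Q : Prop) [Decidable P] [Decidable Q] (a : ℕ) :
    (if P then (if Q then a else 0) else 0) = (if Q then (if P then a else 0) else 0) := by
  split_ifs <;> rfl

lemma ite_two (P : Prop) [Decidable P] :
    ((if P then (1:ℕ) else 0) + (if P then 1 else 0)) = if P then 2 else 0 := by
  split_ifs <;> rfl

lemma sum_guard_delta1 {n : ℕ} (p : Fin n → Prop) [DecidablePred p] (i : Fin n) (c : ℕ) :
    (∑ x : Fin n, if p x then (if x = i then c else 0) else 0) = if p i then c else 0 := by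
  rw [Finset.sum_congr rfl (fun x _ => ite_swap (p x) (x = i) c)]
  simp [Finset.sum_ite_eq']

lemma sum_guard_delta {n m : ℕ} (p : Fin n → Fin m → Prop) [∀ x a, Decidable (p x a)]
    (i : Fin n) (c : ℕ) :
    (∑ x : Fin n, ∑ a : Fin m, if p x a then (if x = i then c else 0) else 0)
      = c * ∑ a : Fin m, (if p i a then 1 else 0) := by
  have h : ∀ x : Fin n, (∑ a : Fin m, if p x a then (if x = i then c else 0) else 0)
      = if x = i then c * ∑ a : Fin m, (if p x a then 1 else 0) else 0 := by
    intro x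
    split_ifs with hxi
    · subst hxi
      rw [Finset.mul_sum]
      refine Finset.sum_congr rfl (fun a _ => ?_)
      split_ifs <;> simp
    · refine Finset.sum_eq_zero (fun a _ => ?_)
      simp [hxi]
  rw [Finset.sum_congr rfl (fun x _ => h x)]
  simp [Finset.sum_ite_eq']

lemma no_factor (hr : 0 < r) (hk : 0 < k) (hk3 : 3 * k ≤ 2 * r + 1) :
    ¬ (Gg r k).HasFactor (2 * k) := by
  rintro ⟨F, hF⟩
  have key : ∀ v : Vt r k, (∑ e ∈ F, endCount v ((Gg r k).inc e))
      = ∑ e : Et r k, if e ∈ F then endCount v ((Gg r k).inc e) else 0 := by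
    intro v
    symm
    rw [Finset.sum_ite_mem, Finset.univ_inter]
  -- no bridge is in F
  have hp : ∀ i, (Sum.inl (Sum.inl i) : Et r k) ∉ F := by
    intro i hiF
    have h := hF (some (.inl i))
    rw [key] at h
    rw [Fintype.sum_sum_type, Fintype.sum_sum_type, Fintype.sum_sum_type,
      Fintype.sum_prod_type, Fintype.sum_prod_type, Fintype.sum_prod_type] at h
    simp only [Gg, endCount_mk] at h
    simp only [reduceCtorEq, Option.some.injEq, Sum.inl.injEq, Sum.inr.injEq,
      if_false, if_true, zero_add, add_zero, ite_self, ite_two,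
      Finset.sum_const_zero] at h
    rw [sum_guard_delta1 (fun x => (Sum.inl (Sum.inl x) : Et r k) ∈ F) i 1] at h
    rw [sum_guard_delta (fun x a => (Sum.inl (Sum.inr (x, a)) : Et r k) ∈ F) i 2] at h
    rw [if_pos hiF] at h
    omega
  -- each triple vertex uses at most 2 of its triple edges
  have hw : ∀ j : Fin (k-1),
      (∑ a : Fin 3, if (Sum.inr (Sum.inl (j, a)) : Et r k) ∈ F then (1:ℕ) else 0) ≤ 2 := by
    intro j
    have h := hF (some (.inr j))
    rw [key] at h
    rw [Fintype.sum_sum_type, Fintype.sum_sum_type, Fintype.sum_sum_type,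
      Fintype.sum_prod_type, Fintype.sum_prod_type, Fintype.sum_prod_type] at h
    simp only [Gg, endCount_mk] at h
    simp only [reduceCtorEq, Option.some.injEq, Sum.inl.injEq, Sum.inr.injEq,
      if_false, if_true, zero_add, add_zero, ite_self, ite_two,
      Finset.sum_const_zero] at h
    rw [sum_guard_delta (fun x a => (Sum.inr (Sum.inl (x, a)) : Et r k) ∈ F) j 1] at h
    rw [sum_guard_delta (fun x a => (Sum.inr (Sum.inr (x, a)) : Et r k) ∈ F) j 2] at h
    have hb : (∑ a : Fin 3, if (Sum.inr (Sum.inl (j, a)) : Et r k) ∈ F then (1:ℕ) else 0)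
        ≤ ∑ _a : Fin 3, 1 :=
      Finset.sum_le_sum (fun a _ => by split_ifs <;> omega)
    simp only [Finset.sum_const, Finset.card_univ, Fintype.card_fin, smul_eq_mul, mul_one] at hb
    omega
  -- hub equation
  have hu := hF (none : Vt r k)
  rw [key] at hu
  rw [Fintype.sum_sum_type, Fintype.sum_sum_type, Fintype.sum_sum_type,
    Fintype.sum_prod_type, Fintype.sum_prod_type, Fintype.sum_prod_type] at hu
  simp only [Gg, endCount_mk] at hu
  simp only [reduceCtorEq, Option.some.injEq, Sum.inl.injEq, Sum.inr.injEq,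
    if_false, if_true, zero_add, add_zero, ite_self, ite_two,
    Finset.sum_const_zero] at hu
  rw [Finset.sum_eq_zero (fun x _ => by rw [if_neg (hp x)])] at hu
  have hbound : (∑ x : Fin (k-1), ∑ a : Fin 3,
      if (Sum.inr (Sum.inl (x, a)) : Et r k) ∈ F then (1:ℕ) else 0)
      ≤ ∑ _x : Fin (k-1), 2 :=
    Finset.sum_le_sum (fun x _ => hw x)
  simp only [Finset.sum_const, Finset.card_univ, Fintype.card_fin, smul_eq_mul] at hbound
  omega

end SharpAux

open Multigraph in
/-- For all positive integers `r` and `k` with `k ≤ (2r+1)/3`, there is a `(2r+1)`-regular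
multigraph with exactly `2r+4−3k` cut-edges and no `2k`-factor; hence the bound
`2r−3(k−1)` in the existence theorem is sharp. -/
theorem sharpness_cutedge_bound_for_2k_factor
    (r k : ℕ) (hr : 0 < r) (hk : 0 < k) (hk3 : 3 * k ≤ 2 * r + 1) :
    ∃ (V E : Type) (_ : Fintype V) (_ : Fintype E) (G : Multigraph V E),
      (∀ v : V, G.degree v = 2 * r + 1) ∧
      G.cutEdgeCount = 2 * r + 4 - 3 * k ∧
      ¬ G.HasFactor (2 * k) := by
  refine ⟨SharpAux.Vt r k, SharpAux.Et r k, inferInstance, inferInstance, SharpAux.Gg r k,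
    ?_, ?_, ?_⟩
  · intro v
    obtain _ | (i | j) := v
    · rw [SharpAux.deg_hub]; omega
    · rw [SharpAux.deg_pendant]; omega
    · rw [SharpAux.deg_triple]; omega
  · rw [SharpAux.cutEdgeCount_eq]
  · exact SharpAux.no_factor r k hr hk hk3
end
end

section
/- Let k ≤ (2r+1)/3 and let G be a (2r+1)-regular multigraph whose vertex set admits a partition into sets R, S, T such that: (a) S and T are independent sets with |T| > |S|; (b) every cut-edge of G joins T to a distinct component of G[R]; (c) every edge incident to S either joins S to T, or joins S to a component of G[R] that is joined to S by exactly one edge and to T by exactly one edge; (d) exactly k(|T|−|S|)−1 components of G[R] are joined to T by exactly three edges each; (e) every remaining component of G[R] is a (2r+1)-regular multigraph with no cut-edge and with no edges to S or T; and (f) if k < (2r+1)/3 then |T| − |S| = 1. Then G has no 2k-factor. -/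
open scoped Classical
noncomputable section

open Multigraph in
/-- No edge (including loops) has both endpoints in `S`. -/
def Multigraph.IsIndependent {V E : Type} (G : Multigraph V E) (S : Set V) : Prop :=
  ∀ e : E, ∀ a b : V, G.inc e = s(a, b) → ¬(a ∈ S ∧ b ∈ S)



/-!
Count degrees in a `c`-regular spanning subgraph `F`: since `S` and `T` are independent and every
edge of `G − S − T` stays inside a component `C` of `G[R]`, the degree sums over `T` and `S` give
`c (|T| − |S|) = Σ_C (e_F(C, T) − e_F(C, S))`. For a `2k`-factor `F`, the degree sum over `C`
makes `e_F(C, S) + e_F(C, T)` even, and no cut-edge lies in an even factor. Hence a blister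
contributes at most `0`, a component with three edges to `T` at most `2`, and a component hanging
on a cut-edge at most `0` provided it has at most two edges to `T`; then
`2k (|T| − |S|) ≤ 2 (k (|T| − |S|) − 1)`, which is absurd. That last proviso is the delicate part:
if `3k = 2r + 1`, the identity for `F = G` allows it at most three edges to `T`, and if
`3k < 2r + 1`, applying the identity on each shore of the cut-edge gives `|T| − |S| ≥ 2`,
contradicting (f).
-/

namespace Multigraph

open Finset

variable {V E : Type}

theorem IsIndependent.mono {G : Multigraph V E} {A B : Set V} (hB : G.IsIndependent B)
    (hAB : A ⊆ B) : G.IsIndependent A :=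
  fun e a b h hab => hB e a b h ⟨hAB hab.1, hAB hab.2⟩

section EdgeCounting

variable [Fintype E] (G : Multigraph V E)

def interedges (A B : Set V) : Finset E :=
  {e | ∃ a ∈ A, ∃ b ∈ B, G.inc e = s(a, b)}

variable {G}

theorem card_interedges (A B : Set V) : #(G.interedges A B) = G.edgesBetween A B := by
  rw [edgesBetween, Nat.card_eq_fintype_card, Fintype.card_subtype]
  rfl

theorem mem_interedges {A B : Set V} {e : E} :
    e ∈ G.interedges A B ↔ ∃ a ∈ A, ∃ b ∈ B, G.inc e = s(a, b) := by
  simp [interedges]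

theorem mem_interedges_of_inc {A B : Set V} {e : E} {a b : V} (h : G.inc e = s(a, b)) :
    e ∈ G.interedges A B ↔ a ∈ A ∧ b ∈ B ∨ b ∈ A ∧ a ∈ B := by
  simp only [mem_interedges, h]
  constructor
  · rintro ⟨x, hx, y, hy, hxy⟩
    rcases Sym2.eq_iff.mp hxy with ⟨rfl, rfl⟩ | ⟨rfl, rfl⟩
    exacts [Or.inl ⟨hx, hy⟩, Or.inr ⟨hx, hy⟩]
  · rintro (⟨ha, hb⟩ | ⟨hb, ha⟩)
    exacts [⟨a, ha, b, hb, rfl⟩, ⟨b, hb, a, ha, Sym2.eq_swap⟩]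

theorem interedges_mono_right {A B B' : Set V} (h : B ⊆ B') :
    G.interedges A B ⊆ G.interedges A B' := by
  intro e
  simp only [mem_interedges]
  exact fun ⟨a, ha, b, hb, hab⟩ => ⟨a, ha, b, h hb, hab⟩

theorem interedges_comm (A B : Set V) : G.interedges A B = G.interedges B A := by
  ext e
  induction h : G.inc e using Sym2.ind with
  | _ a b => rw [mem_interedges_of_inc h, mem_interedges_of_inc h]; tauto

theorem interedges_eq_empty_of_isIndependent {A : Set V} (hA : G.IsIndependent A) :
    G.interedges A A = ∅ := by
  ext e
  induction h : G.inc e using Sym2.ind with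
  | _ a b =>
    rw [mem_interedges_of_inc h]
    simp only [notMem_empty, iff_false]
    exact fun hab => hab.elim (hA e a b h) (fun hba => hA e a b h hba.symm)

theorem sum_endCount_mk [Fintype V] (W : Set V) (a b : V) :
    ∑ v ∈ W.toFinset, endCount v s(a, b) =
      (if a ∈ W then 1 else 0) + (if b ∈ W then 1 else 0) := by
  simp [endCount, sum_add_distrib]

theorem sum_degree_eq_of_disjoint [Fintype V] (F : Finset E) {W A B : Set V}
    (hWA : Disjoint W A) (hWB : Disjoint W B) (hAB : Disjoint A B)
    (hW : ∀ e a b, G.inc e = s(a, b) → a ∈ W → b ∈ W ∨ b ∈ A ∨ b ∈ B) :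
    ∑ v ∈ W.toFinset, ∑ e ∈ F, endCount v (G.inc e) =
      2 * #(F ∩ G.interedges W W) + #(F ∩ G.interedges W A) + #(F ∩ G.interedges W B) := by
  simp only [← filter_mem_eq_inter, card_filter, mul_sum, ← sum_add_distrib]
  rw [sum_comm]
  refine sum_congr rfl fun e _ => ?_
  induction h : G.inc e using Sym2.ind with
  | _ a b =>
    have := hW e a b h
    have := hW e b a (h.trans Sym2.eq_swap)
    simp only [sum_endCount_mk, mem_interedges_of_inc h]
    rw [Set.disjoint_left] at hWA hWB hAB
    grind

end EdgeCounting

section Components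

variable {G : Multigraph V E} {R C D : Set V}

theorem reachIn_symm {x y : V} (h : G.ReachIn R x y) : G.ReachIn R y x :=
  have : Std.Symm (G.StepIn R) := ⟨fun _ _ ⟨hx, hy, e, he⟩ => ⟨hy, hx, e, he.trans Sym2.eq_swap⟩⟩
  Relation.ReflTransGen.stdSymm.symm _ _ h

theorem IsCompOf.subset (hC : G.IsCompOf R C) : C ⊆ R := by
  obtain ⟨v, hv, rfl⟩ := hC
  intro w hw
  induction hw with
  | refl => exact hv
  | tail _ h _ => exact h.2.1

theorem IsCompOf.eq_componentIn (hC : G.IsCompOf R C) {u : V} (hu : u ∈ C) :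
    C = G.componentIn R u := by
  obtain ⟨v, -, rfl⟩ := hC
  ext w
  exact ⟨fun hw => (reachIn_symm hu).trans hw, fun hw => hu.trans hw⟩

theorem IsCompOf.eq_of_mem (hC : G.IsCompOf R C) (hD : G.IsCompOf R D) {u : V} (hC' : u ∈ C)
    (hD' : u ∈ D) : C = D :=
  (hC.eq_componentIn hC').trans (hD.eq_componentIn hD').symm

theorem IsCompOf.mem_of_inc (hC : G.IsCompOf R C) {e : E} {a b : V} (h : G.inc e = s(a, b))
    (ha : a ∈ C) (hb : b ∈ R) : b ∈ C := by
  rw [hC.eq_componentIn ha]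
  exact Relation.ReflTransGen.single ⟨hC.subset ha, hb, e, h⟩

theorem IsCompOf.subset_or_disjoint (hC : G.IsCompOf R C) {Y : Set V}
    (hY : ∀ e a b, G.inc e = s(a, b) → a ∈ R → b ∈ R → (a ∈ Y ↔ b ∈ Y)) :
    C ⊆ Y ∨ Disjoint C Y := by
  obtain ⟨v, -, rfl⟩ := hC
  by_cases hv : v ∈ Y
  · refine Or.inl fun w hw => ?_
    induction hw with
    | refl => exact hv
    | tail _ h ih => obtain ⟨ha, hb, e, he⟩ := h; exact (hY e _ _ he ha hb).mp ih
  · refine Or.inr (Set.disjoint_left.mpr fun w hw => ?_)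
    induction hw with
    | refl => exact hv
    | tail _ h ih => obtain ⟨ha, hb, e, he⟩ := h; exact fun hw => ih ((hY e _ _ he ha hb).mpr hw)

variable [Fintype V] (G R)

def componentsIn : Finset (Set V) :=
  {C | G.IsCompOf R C}

variable {G R}

theorem mem_componentsIn : C ∈ G.componentsIn R ↔ G.IsCompOf R C := by
  simp [componentsIn]

theorem card_inter_interedges_eq_sum [Fintype E] (F : Finset E) {W : Set V}
    (hWR : Disjoint W R) :
    #(F ∩ G.interedges R W) = ∑ C ∈ G.componentsIn R, #(F ∩ G.interedges C W) := by
  rw [← card_biUnion]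
  · congr 1
    ext e
    simp only [mem_biUnion, mem_inter, mem_componentsIn, mem_interedges]
    constructor
    · rintro ⟨he, a, ha, b, hb, h⟩
      exact ⟨_, ⟨a, ha, rfl⟩, he, a, Relation.ReflTransGen.refl, b, hb, h⟩
    · rintro ⟨C, hC, he, a, ha, b, hb, h⟩
      exact ⟨he, a, hC.subset ha, b, hb, h⟩
  · intro C hC D hD hCD
    refine disjoint_left.mpr fun e heC heD => hCD ?_
    simp only [mem_inter, mem_interedges] at heC heD
    obtain ⟨-, a, ha, b, hb, h⟩ := heC
    obtain ⟨-, a', ha', b', hb', h'⟩ := heD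
    rcases Sym2.eq_iff.mp (h.symm.trans h') with ⟨rfl, -⟩ | ⟨rfl, -⟩
    · exact (mem_componentsIn.mp hC).eq_of_mem (mem_componentsIn.mp hD) ha ha'
    · exact (Set.disjoint_left.mp hWR hb' ((mem_componentsIn.mp hC).subset ha)).elim

end Components

section CutEdges

variable {G : Multigraph V E} {e₀ : E} {Y : Set V}

variable (G) in
def IsShore (e₀ : E) (Y : Set V) : Prop :=
  ∀ e ≠ e₀, ∀ a b, G.inc e = s(a, b) → (a ∈ Y ↔ b ∈ Y)

theorem IsShore.compl (hY : G.IsShore e₀ Y) : G.IsShore e₀ Yᶜ :=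
  fun e he a b h => not_congr (hY e he a b h)

theorem IsCutEdge.exists_isShore [Finite V] (he₀ : G.IsCutEdge e₀) {x y : V}
    (h : G.inc e₀ = s(x, y)) : ∃ Y, G.IsShore e₀ Y ∧ x ∉ Y ∧ y ∈ Y := by
  refine ⟨{w | Relation.ReflTransGen (G.Step {e₀}) y w}, fun e he a b hab => ?_, fun hyx => ?_,
    .refl⟩
  · have he' : e ∉ ({e₀} : Set E) := he
    exact ⟨fun ha => ha.tail ⟨e, he', hab⟩, fun hb => hb.tail ⟨e, he', hab.trans Sym2.eq_swap⟩⟩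
  have hxy : Quot.mk (G.Step {e₀}) x = Quot.mk _ y :=
    (Quot.eqvGen_sound (Relation.EqvGen.reflTransGen_le_eqvGen _ _ _ hyx)).symm
  -- If `y` still reaches `x` in `G - e₀`, then `G - e₀` has no more components than `G`.
  let f : Quot (G.Step ∅) → Quot (G.Step {e₀}) := Quot.lift (Quot.mk _) fun p q ⟨e, _, hpq⟩ => by
    by_cases he : e = e₀
    · subst he
      rcases Sym2.eq_iff.mp (h.symm.trans hpq) with ⟨rfl, rfl⟩ | ⟨rfl, rfl⟩
      exacts [hxy, hxy.symm]
    · exact Quot.sound ⟨e, he, hpq⟩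
  have := Nat.card_le_card_of_surjective f fun q => q.inductionOn fun p => ⟨Quot.mk _ p, rfl⟩
  exact absurd he₀ (not_lt.mpr this)

theorem IsCutEdge.notMem_of_even [Fintype V] [Fintype E] (he₀ : G.IsCutEdge e₀) {F : Finset E}
    {k : ℕ} (hF : ∀ v, ∑ e ∈ F, endCount v (G.inc e) = 2 * k) : e₀ ∉ F := by
  intro hmem
  induction h : G.inc e₀ using Sym2.ind with
  | _ x y =>
    obtain ⟨Y, hY, hx, hy⟩ := he₀.exists_isShore h
    have hsum : ∑ e ∈ F, ∑ v ∈ Y.toFinset, endCount v (G.inc e) = 2 * (k * Y.ncard) := by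
      rw [sum_comm, ← mul_assoc, Set.ncard_eq_toFinset_card', card_eq_sum_ones, mul_sum]
      simp [hF]
    have heven : ∀ e ∈ F.erase e₀, Even (∑ v ∈ Y.toFinset, endCount v (G.inc e)) := by
      intro e he
      induction hab : G.inc e using Sym2.ind with
      | _ a b =>
        rw [sum_endCount_mk, hY e (ne_of_mem_erase he) a b hab]
        split_ifs <;> simp
    rw [← add_sum_erase F _ hmem, h, sum_endCount_mk, if_neg hx, if_pos hy] at hsum
    obtain ⟨m, hm⟩ := even_sum _ heven
    omega

theorem IsShore.interedges_inter_of_subset [Fintype E] {C W : Set V} (hY : G.IsShore e₀ Y)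
    (hCY : C ⊆ Y) (h₀ : e₀ ∉ G.interedges C W) : G.interedges C (W ∩ Y) = G.interedges C W := by
  refine (interedges_mono_right Set.inter_subset_left).antisymm fun e he => ?_
  obtain ⟨a, ha, b, hb, hab⟩ := mem_interedges.mp he
  exact mem_interedges.mpr
    ⟨a, ha, b, ⟨hb, (hY e (ne_of_mem_of_not_mem he h₀) a b hab).mp (hCY ha)⟩, hab⟩

theorem IsShore.interedges_inter_of_disjoint [Fintype E] {C W : Set V} (hY : G.IsShore e₀ Y)
    (hCY : Disjoint C Y) (h₀ : e₀ ∉ G.interedges C W) : G.interedges C (W ∩ Y) = ∅ := by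
  refine eq_empty_of_forall_notMem fun e he => ?_
  obtain ⟨a, ha, b, hb, hab⟩ := mem_interedges.mp he
  have he' := interedges_mono_right Set.inter_subset_left he
  exact Set.disjoint_left.mp hCY ha ((hY e (ne_of_mem_of_not_mem he' h₀) a b hab).mpr hb.2)

theorem IsShore.subset_or_disjoint {R C : Set V} (hY : G.IsShore e₀ Y) (hC : G.IsCompOf R C)
    {x : V} (hx : x ∈ G.inc e₀) (hxR : x ∉ R) : C ⊆ Y ∨ Disjoint C Y :=
  hC.subset_or_disjoint fun e a b h ha hb => hY e (by
    rintro rfl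
    rw [h, Sym2.mem_iff] at hx
    rcases hx with rfl | rfl
    exacts [hxR ha, hxR hb]) a b h

end CutEdges

variable (G : Multigraph V E) in
structure IsIndepPartition (R S T : Set V) : Prop where
  cover : ∀ v, v ∈ R ∨ v ∈ S ∨ v ∈ T
  disjoint_RS : Disjoint R S
  disjoint_RT : Disjoint R T
  disjoint_ST : Disjoint S T
  indepS : G.IsIndependent S
  indepT : G.IsIndependent T

-- Condition (c), read per component: a component of `G[R]` joined to `S` is a blister.
def BlisterCondition [Fintype V] [Fintype E] (G : Multigraph V E) (R S T : Set V) : Prop :=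
  ∀ C ∈ G.componentsIn R, #(G.interedges C S) ≠ 0 →
    #(G.interedges C S) = 1 ∧ #(G.interedges C T) = 1

namespace IsIndepPartition

variable {G : Multigraph V E} {R S T : Set V}

theorem symm (P : G.IsIndepPartition R S T) : G.IsIndepPartition R T S :=
  ⟨fun v => (P.cover v).imp_right Or.symm, P.disjoint_RT, P.disjoint_RS, P.disjoint_ST.symm,
    P.indepT, P.indepS⟩

variable [Fintype V] [Fintype E] {F : Finset E} {c : ℕ}

theorem mul_ncard_eq (P : G.IsIndepPartition R S T)
    (hF : ∀ v, ∑ e ∈ F, endCount v (G.inc e) = c) {W : Set V} (hWT : W ⊆ T) :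
    c * W.ncard = #(F ∩ G.interedges W S) +
      ∑ C ∈ G.componentsIn R, #(F ∩ G.interedges C W) := by
  have hWS := P.disjoint_ST.symm.mono_left hWT
  have hWR := P.disjoint_RT.symm.mono_left hWT
  have hsum := sum_degree_eq_of_disjoint F hWS hWR P.disjoint_RS.symm fun e a b h ha => by
    rcases P.cover b with hb | hb | hb
    exacts [Or.inr (Or.inr hb), Or.inr (Or.inl hb), (P.indepT e a b h ⟨hWT ha, hb⟩).elim]
  simp only [hF, sum_const, smul_eq_mul, ← Set.ncard_eq_toFinset_card',
    interedges_eq_empty_of_isIndependent (P.indepT.mono hWT), inter_empty, card_empty,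
    mul_zero, zero_add] at hsum
  rw [mul_comm, hsum, interedges_comm W R, card_inter_interedges_eq_sum F hWR]

theorem mul_ncard_sub_ncard_eq_sum (P : G.IsIndepPartition R S T)
    (hF : ∀ v, ∑ e ∈ F, endCount v (G.inc e) = c) {Y : Set V}
    (hY : ∀ e a b, G.inc e = s(a, b) → a ∈ S → b ∈ T → (a ∈ Y ↔ b ∈ Y)) :
    (c : ℤ) * ((T ∩ Y).ncard - (S ∩ Y).ncard) =
      ∑ C ∈ G.componentsIn R,
        ((#(F ∩ G.interedges C (T ∩ Y)) : ℤ) - #(F ∩ G.interedges C (S ∩ Y))) := by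
  have hT := P.mul_ncard_eq hF (W := T ∩ Y) Set.inter_subset_left
  have hS := P.symm.mul_ncard_eq hF (W := S ∩ Y) Set.inter_subset_left
  have hcross : G.interedges (T ∩ Y) S = G.interedges (S ∩ Y) T := by
    ext e
    induction h : G.inc e using Sym2.ind with
    | _ a b =>
      have := hY e a b h
      have := hY e b a (h.trans Sym2.eq_swap)
      simp only [mem_interedges_of_inc h, Set.mem_inter_iff]
      tauto
  rw [hcross] at hT
  zify at hT hS
  rw [sum_sub_distrib, mul_sub, hT, hS]
  ring

theorem even_card_add (P : G.IsIndepPartition R S T) {k : ℕ}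
    (hF : ∀ v, ∑ e ∈ F, endCount v (G.inc e) = 2 * k) {C : Set V}
    (hC : C ∈ G.componentsIn R) :
    Even (#(F ∩ G.interedges C S) + #(F ∩ G.interedges C T)) := by
  have hCR := (mem_componentsIn.mp hC).subset
  have hsum := sum_degree_eq_of_disjoint F (P.disjoint_RS.mono_left hCR)
    (P.disjoint_RT.mono_left hCR) P.disjoint_ST fun e a b h ha => by
      rcases P.cover b with hb | hb | hb
      exacts [Or.inl ((mem_componentsIn.mp hC).mem_of_inc h ha hb), Or.inr (Or.inl hb),
        Or.inr (Or.inr hb)]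
  simp only [hF, sum_const, smul_eq_mul, add_assoc] at hsum
  have h2 : Even (#C.toFinset * (2 * k)) := (even_two_mul k).mul_left _
  rw [hsum] at h2
  exact (Nat.even_add.mp h2).mp (even_two_mul _)

theorem card_interedges_inter_le_of_isShore (P : G.IsIndepPartition R S T)
    (hS : G.BlisterCondition R S T)
    {C₀ : Set V} (hC₀ : C₀ ∈ G.componentsIn R) {e₀ : E} (he₀ : e₀ ∈ G.interedges C₀ T)
    {Y : Set V} (hY : G.IsShore e₀ Y) {C : Set V} (hC : C ∈ G.componentsIn R) (hCC : C ≠ C₀) :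
    #(G.interedges C (S ∩ Y)) ≤ #(G.interedges C (T ∩ Y)) := by
  obtain ⟨u, hu, t₀, ht₀, h₀⟩ := mem_interedges.mp he₀
  have ht₀R : t₀ ∉ R := Set.disjoint_right.mp P.disjoint_RT ht₀
  have hC₀' : ∀ W, e₀ ∉ G.interedges C W := fun W he => by
    rw [mem_interedges_of_inc h₀] at he
    rcases he with ⟨huC, -⟩ | ⟨ht₀C, -⟩
    exacts [hCC ((mem_componentsIn.mp hC).eq_of_mem (mem_componentsIn.mp hC₀) huC hu),
      ht₀R ((mem_componentsIn.mp hC).subset ht₀C)]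
  rcases hY.subset_or_disjoint (mem_componentsIn.mp hC) (h₀ ▸ Sym2.mem_mk_right u t₀) ht₀R
    with hCY | hCY
  · rw [hY.interedges_inter_of_subset hCY (hC₀' S), hY.interedges_inter_of_subset hCY (hC₀' T)]
    by_cases h : #(G.interedges C S) = 0
    · omega
    · have := hS C hC h; omega
  · rw [hY.interedges_inter_of_disjoint hCY (hC₀' S)]
    exact Nat.zero_le _

theorem ncard_inter_lt_of_isShore (P : G.IsIndepPartition R S T)
    (hreg : ∀ v, G.degree v = c) (hS : G.BlisterCondition R S T)
    {C₀ : Set V} (hC₀ : C₀ ∈ G.componentsIn R) (hC₀S : #(G.interedges C₀ S) = 0)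
    {e₀ : E} (he₀ : e₀ ∈ G.interedges C₀ T) {Y : Set V} (hY : G.IsShore e₀ Y)
    (hpos : 0 < #(G.interedges C₀ (T ∩ Y))) :
    (S ∩ Y).ncard < (T ∩ Y).ncard := by
  obtain ⟨u, hu, t₀, ht₀, h₀⟩ := mem_interedges.mp he₀
  have huR : u ∈ R := (mem_componentsIn.mp hC₀).subset hu
  have hu₀ : u ∈ G.inc e₀ := h₀ ▸ Sym2.mem_mk_left u t₀
  have hcount := P.mul_ncard_sub_ncard_eq_sum (F := univ) hreg (Y := Y) fun e a b h ha hb =>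
    hY e (fun he => by
      rw [← he, h, Sym2.mem_iff] at hu₀
      rcases hu₀ with rfl | rfl
      exacts [Set.disjoint_left.mp P.disjoint_RS huR ha, Set.disjoint_left.mp P.disjoint_RT huR hb])
    a b h
  simp only [univ_inter] at hcount
  have hC₀Y : #(G.interedges C₀ (S ∩ Y)) = 0 := Nat.eq_zero_of_le_zero <|
    hC₀S ▸ card_le_card (interedges_mono_right Set.inter_subset_left)
  have hnonneg : ∀ C ∈ G.componentsIn R,
      (0 : ℤ) ≤ #(G.interedges C (T ∩ Y)) - #(G.interedges C (S ∩ Y)) := fun C hC => by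
    rw [sub_nonneg, Nat.cast_le]
    by_cases hCC : C = C₀
    · rw [hCC, hC₀Y]
      exact Nat.zero_le _
    · exact P.card_interedges_inter_le_of_isShore hS hC₀ he₀ hY hC hCC
  have hC₀le := single_le_sum hnonneg hC₀
  rw [← hcount, hC₀Y] at hC₀le
  by_contra! hle
  have : (c : ℤ) * ((T ∩ Y).ncard - (S ∩ Y).ncard) ≤ 0 :=
    mul_nonpos_of_nonneg_of_nonpos (Nat.cast_nonneg c) (by omega)
  omega

theorem ncard_add_two_le_of_isCutEdge (P : G.IsIndepPartition R S T)
    (hreg : ∀ v, G.degree v = c)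
    (hS : G.BlisterCondition R S T)
    {C₀ : Set V} (hC₀ : C₀ ∈ G.componentsIn R) (hC₀S : #(G.interedges C₀ S) = 0)
    (hC₀T : 2 ≤ #(G.interedges C₀ T)) {e₀ : E} (he₀ : e₀ ∈ G.interedges C₀ T)
    (hcut : G.IsCutEdge e₀) :
    S.ncard + 2 ≤ T.ncard := by
  obtain ⟨u, hu, t₀, ht₀, h₀⟩ := mem_interedges.mp he₀
  obtain ⟨Y, hY, ht₀Y, huY⟩ := hcut.exists_isShore (h₀.trans Sym2.eq_swap)
  have hC₀Y : C₀ ⊆ Y := by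
    refine (hY.subset_or_disjoint (mem_componentsIn.mp hC₀) (h₀ ▸ Sym2.mem_mk_right u t₀)
      (Set.disjoint_right.mp P.disjoint_RT ht₀)).resolve_right fun h => ?_
    exact Set.disjoint_left.mp h hu huY
  obtain ⟨e, he, hne⟩ := exists_mem_ne hC₀T e₀
  obtain ⟨a, ha, b, hb, hab⟩ := mem_interedges.mp he
  have hinY := P.ncard_inter_lt_of_isShore hreg hS hC₀ hC₀S he₀ hY <| card_pos.mpr
    ⟨e, mem_interedges.mpr ⟨a, ha, b, ⟨hb, (hY e hne a b hab).mp (hC₀Y ha)⟩, hab⟩⟩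
  have hinYc := P.ncard_inter_lt_of_isShore hreg hS hC₀ hC₀S he₀ hY.compl <| card_pos.mpr
    ⟨e₀, mem_interedges.mpr ⟨u, hu, t₀, ⟨ht₀, ht₀Y⟩, h₀⟩⟩
  rw [← Set.ncard_inter_add_ncard_sdiff_eq_ncard T Y,
    ← Set.ncard_inter_add_ncard_sdiff_eq_ncard S Y, Set.sdiff_eq, Set.sdiff_eq]
  omega

theorem three_mul_card_add_le (P : G.IsIndepPartition R S T) (hreg : ∀ v, G.degree v = c)
    (hS : G.BlisterCondition R S T)
    {C₀ : Set V} (hC₀ : C₀ ∈ G.componentsIn R) (hC₀S : #(G.interedges C₀ S) = 0)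
    (hC₀T : #(G.interedges C₀ T) ≠ 3) :
    3 * #{C ∈ G.componentsIn R | #(G.interedges C T) = 3} + #(G.interedges C₀ T) ≤
      (c : ℤ) * (T.ncard - S.ncard) := by
  have hcount := P.mul_ncard_sub_ncard_eq_sum (F := univ) hreg (Y := Set.univ) (by simp)
  simp only [univ_inter, Set.inter_univ] at hcount
  rw [hcount]
  calc (3 * #{C ∈ G.componentsIn R | #(G.interedges C T) = 3} + #(G.interedges C₀ T) : ℤ)
      = ∑ C ∈ G.componentsIn R, ((3 * if #(G.interedges C T) = 3 then 1 else 0) +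
          if C = C₀ then (#(G.interedges C₀ T) : ℤ) else 0) := by
        rw [sum_add_distrib, ← mul_sum, sum_ite_eq' _ _ _, if_pos hC₀, sum_boole]
    _ ≤ _ := sum_le_sum fun C hC => by
        by_cases hCC : C = C₀
        · subst hCC
          simp [hC₀S, hC₀T]
        · have := hS C hC
          rw [if_neg hCC]
          split_ifs <;> omega

theorem mul_le_card_of_factor (P : G.IsIndepPartition R S T) {F : Finset E} {k : ℕ}
    (hF : ∀ v, ∑ e ∈ F, endCount v (G.inc e) = 2 * k)
    (hS : G.BlisterCondition R S T)
    (hT : ∀ C ∈ G.componentsIn R, #(G.interedges C S) = 0 → #(G.interedges C T) ≠ 3 →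
      #(F ∩ G.interedges C T) ≤ 1) :
    (k : ℤ) * (T.ncard - S.ncard) ≤ #{C ∈ G.componentsIn R | #(G.interedges C T) = 3} := by
  have hcount := P.mul_ncard_sub_ncard_eq_sum hF (Y := Set.univ) (by simp)
  simp only [Set.inter_univ] at hcount
  have hC : ∀ C ∈ G.componentsIn R, (#(F ∩ G.interedges C T) : ℤ) - #(F ∩ G.interedges C S) ≤
      2 * if #(G.interedges C T) = 3 then 1 else 0 := by
    intro C hC
    -- Parity turns `e_F(C, T) ≤ 3` into `e_F(C, T) ≤ 2` when `C` has three edges to `T`.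
    have hpar := P.even_card_add hF hC
    have hFS := card_le_card (inter_subset_right (s₁ := F) (s₂ := G.interedges C S))
    have hFT := card_le_card (inter_subset_right (s₁ := F) (s₂ := G.interedges C T))
    have := hS C hC
    have := hT C hC
    rw [Nat.even_iff] at hpar
    split_ifs <;> omega
  have := sum_le_sum hC
  rw [← hcount, ← mul_sum, sum_boole] at this
  push_cast at this
  linarith

theorem card_interedges_le_two_of_isCutEdge (P : G.IsIndepPartition R S T) {r k : ℕ}
    (hk3 : 3 * k ≤ 2 * r + 1) (hreg : ∀ v, G.degree v = 2 * r + 1)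
    (hS : G.BlisterCondition R S T)
    {D : ℕ} (hD : T.ncard = S.ncard + D) (hkD : 1 ≤ k * D)
    (htriads : #{C ∈ G.componentsIn R | #(G.interedges C T) = 3} = k * D - 1)
    (hf : 3 * k < 2 * r + 1 → D = 1)
    {C₀ : Set V} (hC₀ : C₀ ∈ G.componentsIn R) (hC₀S : #(G.interedges C₀ S) = 0)
    (hC₀T : #(G.interedges C₀ T) ≠ 3) {e₀ : E} (he₀ : e₀ ∈ G.interedges C₀ T)
    (hcut : G.IsCutEdge e₀) :
    #(G.interedges C₀ T) ≤ 2 := by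
  by_contra! h
  rcases hk3.lt_or_eq with hlt | heq
  · have := P.ncard_add_two_le_of_isCutEdge hreg hS hC₀ hC₀S h.le he₀ hcut
    have := hf hlt
    omega
  · have := P.three_mul_card_add_le hreg hS hC₀ hC₀S hC₀T
    rw [htriads, ← heq, hD, Nat.cast_sub hkD] at this
    have : 4 ≤ #(G.interedges C₀ T) := by omega
    push_cast at *
    linarith

theorem not_hasFactor (P : G.IsIndepPartition R S T) {r k : ℕ} (hk : 0 < k)
    (hk3 : 3 * k ≤ 2 * r + 1) (hreg : ∀ v, G.degree v = 2 * r + 1)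
    (hST : S.ncard < T.ncard)
    (hS : G.BlisterCondition R S T)
    (htriads : #{C ∈ G.componentsIn R | #(G.interedges C T) = 3} = k * (T.ncard - S.ncard) - 1)
    (hcomp : ∀ C ∈ G.componentsIn R, #(G.interedges C S) = 0 → #(G.interedges C T) ≠ 3 →
      #(G.interedges C T) = 0 ∨ ∃ e ∈ G.interedges C T, G.IsCutEdge e)
    (hf : 3 * k < 2 * r + 1 → T.ncard = S.ncard + 1) :
    ¬ G.HasFactor (2 * k) := by
  rintro ⟨F, hF⟩
  obtain ⟨D, hD⟩ : ∃ D, T.ncard = S.ncard + D := ⟨T.ncard - S.ncard, by omega⟩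
  rw [hD, Nat.add_sub_cancel_left] at htriads
  have hkD : 1 ≤ k * D := Nat.one_le_iff_ne_zero.mpr (Nat.mul_ne_zero hk.ne' (by omega))
  have := P.mul_le_card_of_factor hF hS fun C hC hCS hCT => by
    rcases hcomp C hC hCS hCT with h0 | ⟨e, he, hcut⟩
    · exact (card_le_card inter_subset_right).trans (by omega)
    · have hlt := card_lt_card <| (ssubset_iff_of_subset inter_subset_right).mpr
        ⟨e, he, fun h => hcut.notMem_of_even hF (mem_inter.mp h).1⟩
      have := P.card_interedges_le_two_of_isCutEdge hk3 hreg hS hD hkD htriads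
        (fun h => by have := hf h; omega) hC hCS hCT he hcut
      omega
  rw [htriads, hD, Nat.cast_sub hkD] at this
  push_cast at this
  linarith

end IsIndepPartition

section Conditions

variable [Fintype V] [Fintype E] {G : Multigraph V E} {R S T : Set V}

theorem blisterCondition_of_forall_inc (hRT : Disjoint R T)
    (hc : ∀ e : E, ∀ a b : V, G.inc e = s(a, b) → a ∈ S →
      b ∈ T ∨ (b ∈ R ∧ G.edgesBetween (G.componentIn R b) S = 1 ∧
        G.edgesBetween (G.componentIn R b) T = 1)) :
    G.BlisterCondition R S T := by
  intro C hC hCS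
  obtain ⟨e, he⟩ := card_ne_zero.mp hCS
  obtain ⟨b, hb, a, ha, hab⟩ := mem_interedges.mp he
  rcases hc e a b (hab.trans Sym2.eq_swap) ha with hbT | ⟨-, hS, hT⟩
  · exact (Set.disjoint_left.mp hRT ((mem_componentsIn.mp hC).subset hb) hbT).elim
  · rw [← (mem_componentsIn.mp hC).eq_componentIn hb, ← card_interedges] at hS hT
    exact ⟨hS, hT⟩

theorem card_filter_componentsIn_eq (n : ℕ) :
    #{C ∈ G.componentsIn R | #(G.interedges C T) = n} =
      Nat.card {C : Set V // G.IsCompOf R C ∧ G.edgesBetween C T = n} := by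
  simp [Nat.card_eq_fintype_card, Fintype.card_subtype, componentsIn, filter_filter,
    card_interedges]

theorem card_interedges_eq_zero_or_exists_isCutEdge (hRT : Disjoint R T)
    (hb1 : ∀ e : E, G.IsCutEdge e → ∃ t ∈ T, ∃ v ∈ R, G.inc e = s(t, v))
    (he : ∀ C : Set V, G.IsCompOf R C →
      (∀ e : E, G.IsCutEdge e → ∀ v ∈ C, v ∉ G.inc e) →
      ¬ (G.edgesBetween C S = 1 ∧ G.edgesBetween C T = 1) →
      G.edgesBetween C T ≠ 3 → G.edgesBetween C T = 0)
    {C : Set V} (hC : C ∈ G.componentsIn R) (hCS : #(G.interedges C S) = 0)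
    (hCT : #(G.interedges C T) ≠ 3) :
    #(G.interedges C T) = 0 ∨ ∃ e ∈ G.interedges C T, G.IsCutEdge e := by
  by_cases h : ∃ e, G.IsCutEdge e ∧ ∃ v ∈ C, v ∈ G.inc e
  · obtain ⟨e, hcut, v, hv, hve⟩ := h
    obtain ⟨t, ht, w, -, htw⟩ := hb1 e hcut
    rw [htw, Sym2.mem_iff] at hve
    rcases hve with rfl | rfl
    · exact (Set.disjoint_left.mp hRT ((mem_componentsIn.mp hC).subset hv) ht).elim
    · exact Or.inr ⟨e, mem_interedges.mpr ⟨v, hv, t, ht, htw.trans Sym2.eq_swap⟩, hcut⟩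
  · push Not at h
    rw [card_interedges] at hCS hCT ⊢
    exact Or.inl (he C (mem_componentsIn.mp hC) h (fun h1 => by omega) hCT)

end Conditions

end Multigraph

open Multigraph in
theorem no_2k_factor_of_structure_general
    {V E : Type} [Fintype V] [Fintype E] (r k : ℕ) (hk : 0 < k) (hk3 : 3 * k ≤ 2 * r + 1)
    (G : Multigraph V E) (hreg : ∀ v : V, G.degree v = 2 * r + 1)
    (R S T : Set V)
    (hunion : R ∪ S ∪ T = Set.univ)
    (hRS : Disjoint R S) (hRT : Disjoint R T) (hST : Disjoint S T)
    -- (a) S and T are independent sets with |T| > |S|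
    (haS : G.IsIndependent S) (haT : G.IsIndependent T) (haST : S.ncard < T.ncard)
    -- (b) every cut-edge joins T to a distinct component of G[R]
    (hb1 : ∀ e : E, G.IsCutEdge e → ∃ t ∈ T, ∃ v ∈ R, G.inc e = s(t, v))
    -- (c) every edge at S goes to T, or to a component of G[R] joined to S by exactly
    -- one edge and to T by exactly one edge (a blister)
    (hc : ∀ e : E, ∀ a b : V, G.inc e = s(a, b) → a ∈ S →
      b ∈ T ∨ (b ∈ R ∧ G.edgesBetween (G.componentIn R b) S = 1 ∧
        G.edgesBetween (G.componentIn R b) T = 1))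
    -- (d) exactly k(|T|−|S|)−1 components of G[R] are joined to T by exactly three edges
    (hd : Nat.card {C : Set V // G.IsCompOf R C ∧ G.edgesBetween C T = 3}
        = k * (T.ncard - S.ncard) - 1)
    -- (e) every remaining component of G[R] is (2r+1)-regular, has no cut-edge, and has
    -- no edges to S or T
    (he : ∀ C : Set V, G.IsCompOf R C →
      (∀ e : E, G.IsCutEdge e → ∀ v ∈ C, v ∉ G.inc e) →
      ¬ (G.edgesBetween C S = 1 ∧ G.edgesBetween C T = 1) →
      G.edgesBetween C T ≠ 3 →
      G.edgesBetween C S = 0 ∧ G.edgesBetween C T = 0 ∧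
        (∀ v ∈ C, G.degree v = 2 * r + 1) ∧
        (∀ e : E, (∃ v ∈ C, v ∈ G.inc e) → ¬ G.IsCutEdge e))
    -- (f) if k < (2r+1)/3 then |T| − |S| = 1
    (hf : 3 * k < 2 * r + 1 → T.ncard = S.ncard + 1) :
    ¬ G.HasFactor (2 * k) := by
  have P : G.IsIndepPartition R S T :=
    ⟨fun v => by simpa [or_assoc] using Set.eq_univ_iff_forall.mp hunion v,
      hRS, hRT, hST, haS, haT⟩
  exact P.not_hasFactor hk hk3 hreg haST (blisterCondition_of_forall_inc hRT hc)
    ((card_filter_componentsIn_eq 3).trans hd)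
    (fun C hC => card_interedges_eq_zero_or_exists_isCutEdge hRT hb1
      (fun C hC h₁ h₂ h₃ => (he C hC h₁ h₂ h₃).2.1) hC) hf

open Multigraph in
/-- Sufficiency in the characterization of extremal graphs: if `k ≤ (2r+1)/3` and a
`(2r+1)`-regular multigraph `G` has a partition `R, S, T` of its vertex set satisfying
conditions (a)–(f), then `G` has no `2k`-factor. -/
theorem no_2k_factor_of_structure
    {V E : Type} [Fintype V] [Fintype E] (r k : ℕ) (hk : 0 < k) (hk3 : 3 * k ≤ 2 * r + 1)
    (G : Multigraph V E) (hreg : ∀ v : V, G.degree v = 2 * r + 1)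
    (R S T : Set V)
    (hunion : R ∪ S ∪ T = Set.univ)
    (hRS : Disjoint R S) (hRT : Disjoint R T) (hST : Disjoint S T)
    -- (a) S and T are independent sets with |T| > |S|
    (haS : G.IsIndependent S) (haT : G.IsIndependent T) (haST : S.ncard < T.ncard)
    -- (b) every cut-edge joins T to a distinct component of G[R]
    (hb1 : ∀ e : E, G.IsCutEdge e → ∃ t ∈ T, ∃ v ∈ R, G.inc e = s(t, v))
    (hb2 : ∀ e₁ e₂ : E, G.IsCutEdge e₁ → G.IsCutEdge e₂ → e₁ ≠ e₂ →
      ∀ v₁ v₂ : V, v₁ ∈ R → v₂ ∈ R → v₁ ∈ G.inc e₁ → v₂ ∈ G.inc e₂ →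
        ¬ G.ReachIn R v₁ v₂)
    -- (c) every edge at S goes to T, or to a component of G[R] joined to S by exactly
    -- one edge and to T by exactly one edge (a blister)
    (hc : ∀ e : E, ∀ a b : V, G.inc e = s(a, b) → a ∈ S →
      b ∈ T ∨ (b ∈ R ∧ G.edgesBetween (G.componentIn R b) S = 1 ∧
        G.edgesBetween (G.componentIn R b) T = 1))
    -- (d) exactly k(|T|−|S|)−1 components of G[R] are joined to T by exactly three edges
    (hd : Nat.card {C : Set V // G.IsCompOf R C ∧ G.edgesBetween C T = 3}
        = k * (T.ncard - S.ncard) - 1)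
    -- (e) every remaining component of G[R] is (2r+1)-regular, has no cut-edge, and has
    -- no edges to S or T
    (he : ∀ C : Set V, G.IsCompOf R C →
      (∀ e : E, G.IsCutEdge e → ∀ v ∈ C, v ∉ G.inc e) →
      ¬ (G.edgesBetween C S = 1 ∧ G.edgesBetween C T = 1) →
      G.edgesBetween C T ≠ 3 →
      G.edgesBetween C S = 0 ∧ G.edgesBetween C T = 0 ∧
        (∀ v ∈ C, G.degree v = 2 * r + 1) ∧
        (∀ e : E, (∃ v ∈ C, v ∈ G.inc e) → ¬ G.IsCutEdge e))
    -- (f) if k < (2r+1)/3 then |T| − |S| = 1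
    (hf : 3 * k < 2 * r + 1 → T.ncard = S.ncard + 1) :
    ¬ G.HasFactor (2 * k) :=
  no_2k_factor_of_structure_general r k hk hk3 G hreg R S T hunion hRS hRT hST haS haT haST hb1 hc
    hd he hf
end
end

section
/- For all integers t, r, k with 1 ≤ t < r and k > t(2r+1)/(2t+1), there exists a (2t+1)-connected (2r+1)-regular finite simple graph that has no 2k-factor. -/
open scoped Classical
noncomputable section

/-- A graph is `m`-connected if it has more than `m` vertices and remains connected after
deleting any fewer than `m` vertices. -/
def SimpleGraph.IsMConnected {V : Type} [Fintype V] (G : SimpleGraph V) (m : ℕ) : Prop :=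
  m < Fintype.card V ∧ ∀ K : Set V, K.ncard < m → (G.induce Kᶜ).Connected

/-!
Let `D` be the complement of a `(2t+1)`-cycle placed beside a perfect matching on `2(r-t+1)`
further vertices, so `D` has `2r+3` vertices and degrees `2r` on the cycle, `2r+1` elsewhere.
Take `2r+1` disjoint copies of `D` and `2t+1` hub vertices, the `i`-th hub joined to the `i`-th
cycle vertex of every copy: the result is `(2r+1)`-regular.

It is `(2t+1)`-connected: two vertices adjacent in the sparse graph `Dᶜ` have at most four
vertices in their joint closed `Dᶜ`-neighbourhood, so after deleting at most `2t` vertices they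
still have a common `D`-neighbour, and some hub survives together with its neighbours in any two
given copies.

It has no `2k`-factor `H`: all `H`-degrees are even, so each copy sends an even number of
`H`-edges to the hubs, hence at most `2t`, and counting at the hubs gives
`2k(2t+1) ≤ 2t(2r+1)`.
-/

open Finset Function

theorem Set.exists_notMem_image_of_ncard_lt {α β : Type*} [Finite α] (f : α → β) {K : Set α}
    (hK : K.ncard < Nat.card β) : ∃ b, b ∉ f '' K := by
  by_contra! h
  have := Set.ncard_image_le (f := f) (s := K)
  rw [Set.eq_univ_of_forall h, Set.ncard_univ] at this
  omega

namespace SimpleGraph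

section General

variable {V W : Type*}

theorem degree_sum_inl (G : SimpleGraph V) (H : SimpleGraph W) (v : V)
    [Fintype (G.neighborSet v)] [Fintype ((G ⊕g H).neighborSet (.inl v))] :
    (G ⊕g H).degree (.inl v) = G.degree v := by
  simp_rw [← card_neighborSet_eq_degree]
  exact Fintype.card_congr <| (Equiv.setCongr (by ext (w | w) <;> simp)).trans
    (Equiv.Set.image _ _ Sum.inl_injective).symm

theorem degree_sum_inr (G : SimpleGraph V) (H : SimpleGraph W) (w : W)
    [Fintype (H.neighborSet w)] [Fintype ((G ⊕g H).neighborSet (.inr w))] :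
    (G ⊕g H).degree (.inr w) = H.degree w := by
  simp_rw [← card_neighborSet_eq_degree]
  exact Fintype.card_congr <| (Equiv.setCongr (by ext (v | v) <;> simp)).trans
    (Equiv.Set.image _ _ Sum.inr_injective).symm

theorem cycleGraph_degree_eq_two {n : ℕ} (hn : 3 ≤ n) (v : Fin n) :
    (cycleGraph n).degree v = 2 := by
  obtain ⟨n, rfl⟩ := Nat.exists_eq_add_of_le' hn
  exact cycleGraph_degree_three_le

theorem preconnected_induce_compl_of_degree_le [Fintype V] (B : SimpleGraph V) {Δ : ℕ}
    (hB : ∀ v, B.degree v ≤ Δ) {K : Set V} (hK : K.ncard + 2 * Δ < Fintype.card V) :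
    (Bᶜ.induce Kᶜ).Preconnected := by
  rintro ⟨u, hu⟩ ⟨v, hv⟩
  by_cases huv : u = v
  · subst huv; rfl
  by_cases hB_uv : B.Adj u v
  swap
  · exact Adj.reachable (show Bᶜ.Adj u v from ⟨huv, hB_uv⟩)
  -- `u ∈ N_B(v)` and `v ∈ N_B(u)`, so `K ∪ N_B(u) ∪ N_B(v)` already contains `u` and `v`
  obtain ⟨w, hw⟩ : ∃ w, w ∉ K.toFinset ∪ B.neighborFinset u ∪ B.neighborFinset v := by
    by_contra! h
    have hcover := (card_le_card (s := univ) fun w _ => h w).trans (card_union_le _ _)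
    have hKu := card_union_le K.toFinset (B.neighborFinset u)
    rw [card_univ, card_neighborFinset_eq_degree] at hcover
    rw [card_neighborFinset_eq_degree, ← Set.ncard_eq_toFinset_card'] at hKu
    linarith [hB u, hB v]
  simp only [mem_union, Set.mem_toFinset, mem_neighborFinset, not_or] at hw
  obtain ⟨⟨hwK, huw⟩, hvw⟩ := hw
  have huw' : Bᶜ.Adj u w := ⟨fun h => hvw (h ▸ hB_uv.symm), huw⟩
  have hwv : Bᶜ.Adj w v := ⟨fun h => huw (h ▸ hB_uv), fun h => hvw h.symm⟩
  exact (Adj.reachable (G := Bᶜ.induce Kᶜ) (u := ⟨u, hu⟩) (v := ⟨w, hwK⟩) huw').trans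
    (Adj.reachable (G := Bᶜ.induce Kᶜ) (v := ⟨v, hv⟩) hwv)

theorem card_interedges_eq_sum (H : SimpleGraph V) [DecidableRel H.Adj] (s t : Finset V) :
    #(H.interedges s t) = ∑ v ∈ s, #{w ∈ t | H.Adj v w} := by
  simp only [interedges_def, card_filter, sum_product]

theorem even_card_interedges_compl [Fintype V] [DecidableEq V] (H : SimpleGraph V)
    [DecidableRel H.Adj] (s : Finset V) (h : ∀ v ∈ s, Even (H.degree v)) :
    Even #(H.interedges s sᶜ) := by
  have hsplit (v : V) : H.degree v = #{w ∈ s | H.Adj v w} + #{w ∈ sᶜ | H.Adj v w} := by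
    rw [← card_union_of_disjoint (disjoint_filter_filter disjoint_compl_right), ← filter_union,
      union_compl, ← card_neighborFinset_eq_degree, neighborFinset_eq_filter]
  have hinner : Even (∑ v ∈ s, #{w ∈ s | H.Adj v w}) := by
    have hdeg (v : (s : Set V)) : (H.induce (s : Set V)).degree v = #{w ∈ s | H.Adj v w} := by
      have := congrArg card (map_neighborFinset_induce (G := H) (s := (s : Set V)) v)
      rw [card_map, card_neighborFinset_eq_degree, Finset.toFinset_coe, neighborFinset_eq_filter,
        filter_inter, univ_inter] at this
      -- the two sides differ only in the `Fintype` instance of the neighbour set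
      convert this
    rw [← Finset.sum_coe_sort s]
    change Even (∑ v : (s : Set V), #{w ∈ s | H.Adj v w})
    rw [← Finset.sum_congr rfl fun v _ => hdeg v, sum_degrees_eq_twice_card_edges]
    exact even_two_mul _
  have hsum := Finset.even_sum (fun v => H.degree v) h
  rw [sum_congr rfl fun v _ => hsplit v, sum_add_distrib] at hsum
  rw [card_interedges_eq_sum]
  exact (Nat.even_add.1 hsum).1 hinner

end General

section AttachCopies

variable {S ι C : Type} (D : SimpleGraph C) (a : S → C)

def attachCopies (ι : Type) : SimpleGraph (S ⊕ ι × C) where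
  Adj
    | .inl s, .inr (_, c) | .inr (_, c), .inl s => c = a s
    | .inr (i, c), .inr (j, c') => i = j ∧ D.Adj c c'
    | .inl _, .inl _ => False
  symm := ⟨by
    rintro (s | ⟨i, c⟩) (s' | ⟨j, c'⟩) h
    exacts [h, h, h, ⟨h.1.symm, h.2.symm⟩]⟩
  loopless := ⟨by rintro (s | ⟨i, c⟩) h; exacts [h, h.2.ne rfl]⟩

variable {D a} {ι : Type}

@[simp] theorem attachCopies_adj_inl_inl (s s' : S) :
    ¬ (attachCopies D a ι).Adj (.inl s) (.inl s') :=
  id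

@[simp] theorem attachCopies_adj_inl_inr (s : S) (j : ι) (c : C) :
    (attachCopies D a ι).Adj (.inl s) (.inr (j, c)) ↔ c = a s := Iff.rfl

@[simp] theorem attachCopies_adj_inr_inl (s : S) (j : ι) (c : C) :
    (attachCopies D a ι).Adj (.inr (j, c)) (.inl s) ↔ c = a s := Iff.rfl

@[simp] theorem attachCopies_adj_inr_inr (i j : ι) (c c' : C) :
    (attachCopies D a ι).Adj (.inr (i, c)) (.inr (j, c')) ↔ i = j ∧ D.Adj c c' := Iff.rfl

variable [Fintype S] [Fintype ι] [Fintype C]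

theorem degree_attachCopies_inl (s : S) :
    (attachCopies D a ι).degree (.inl s) = Fintype.card ι := by
  rw [← card_neighborFinset_eq_degree,
    show (attachCopies D a ι).neighborFinset (.inl s) = univ.image fun j => .inr (j, a s) by
      ext (s' | ⟨j, c⟩) <;> simp [eq_comm],
    card_image_of_injective, card_univ]
  exact fun _ _ h => by simpa using h

theorem degree_attachCopies_inr (j : ι) (c : C) :
    (attachCopies D a ι).degree (.inr (j, c)) = D.degree c + #{s | a s = c} := by
  rw [← card_neighborFinset_eq_degree, ← card_neighborFinset_eq_degree,
    show (attachCopies D a ι).neighborFinset (.inr (j, c)) =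
      (D.neighborFinset c).image (fun c' => .inr (j, c')) ∪ ({s | a s = c} : Finset S).image .inl by
      ext (s' | ⟨j', c'⟩) <;> simp [eq_comm, and_comm],
    card_union_of_disjoint, card_image_of_injective, card_image_of_injective _ Sum.inl_injective]
  · exact fun _ _ h => by simpa using h
  · simp [Finset.disjoint_left]

section Factor

variable {H : SimpleGraph (S ⊕ ι × C)}

theorem degree_inl_of_le_attachCopies (hH : H ≤ attachCopies D a ι) (s : S) :
    H.degree (.inl s) = #{j | H.Adj (.inl s) (.inr (j, a s))} := by
  rw [← card_neighborFinset_eq_degree,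
    show H.neighborFinset (.inl s) = ({j | H.Adj (.inl s) (.inr (j, a s))} : Finset ι).image
        fun j => .inr (j, a s) by
      ext (s' | ⟨j, c⟩)
      · rw [mem_neighborFinset]
        exact iff_of_false (fun h => hH h) (by simp)
      · simp only [mem_neighborFinset, mem_image, mem_filter, mem_univ, true_and]
        refine ⟨fun h => ⟨j, ?_⟩, ?_⟩
        · obtain rfl : c = a s := hH h
          exact ⟨h, rfl⟩
        · rintro ⟨j, h, he⟩
          simp only [Sum.inr.injEq, Prod.mk.injEq] at he
          obtain ⟨rfl, rfl⟩ := he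
          exact h]
  exact card_image_of_injective _ fun _ _ h => by simpa using h

theorem card_interedges_copy_of_le_attachCopies (hH : H ≤ attachCopies D a ι) (j : ι) :
    #(H.interedges (univ.image fun c => .inr (j, c)) (univ.image fun c => .inr (j, c))ᶜ) =
      #{s | H.Adj (.inl s) (.inr (j, a s))} := by
  rw [show H.interedges (univ.image fun c => .inr (j, c)) (univ.image fun c => .inr (j, c))ᶜ =
      ({s | H.Adj (.inl s) (.inr (j, a s))} : Finset S).image fun s => (.inr (j, a s), .inl s) by
    ext ⟨u, w⟩
    rcases u with s | ⟨i, c⟩ <;> rcases w with s' | ⟨i', c'⟩ <;> simp [mem_interedges_iff]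
    · constructor
      · rintro ⟨rfl, h⟩
        obtain rfl : c = a s' := hH h
        exact ⟨h.symm, rfl, rfl⟩
      · rintro ⟨h, rfl, rfl⟩
        exact ⟨rfl, h.symm⟩
    · rintro rfl hne h
      exact hne (hH h).1]
  exact card_image_of_injective _ fun _ _ h => by simpa using congrArg Prod.snd h

theorem card_mul_le_of_regular_le_attachCopies (hS : Odd (Fintype.card S))
    (hH : H ≤ attachCopies D a ι) {k : ℕ} (hdeg : ∀ v, H.degree v = 2 * k) :
    Fintype.card S * (2 * k) ≤ Fintype.card ι * (Fintype.card S - 1) := by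
  have hcopy (j : ι) : #{s | H.Adj (.inl s) (.inr (j, a s))} ≤ Fintype.card S - 1 := by
    have heven : Even #{s | H.Adj (.inl s) (.inr (j, a s))} := by
      rw [← card_interedges_copy_of_le_attachCopies hH j]
      exact even_card_interedges_compl H _ fun v _ => by rw [hdeg]; exact even_two_mul k
    have hle : #{s | H.Adj (.inl s) (.inr (j, a s))} ≤ Fintype.card S :=
      (card_filter_le _ _).trans_eq card_univ
    obtain ⟨m, hm⟩ := hS
    obtain ⟨n, hn⟩ := heven
    omega
  calc Fintype.card S * (2 * k) = ∑ s, H.degree (.inl s) := by simp [hdeg]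
    _ = ∑ j, #{s | H.Adj (.inl s) (.inr (j, a s))} := by
      simp only [degree_inl_of_le_attachCopies hH, card_filter]
      exact sum_comm
    _ ≤ ∑ _j : ι, (Fintype.card S - 1) := sum_le_sum fun j _ => hcopy j
    _ = Fintype.card ι * (Fintype.card S - 1) := by simp

end Factor

section Connectivity

variable {K : Set (S ⊕ ι × C)}

theorem reachable_induce_attachCopies_of_copy (hK : K.ncard < Fintype.card S)
    (hD : ∀ K : Set C, K.ncard < Fintype.card S → (D.induce Kᶜ).Preconnected)
    (j : ι) {c c' : C} (hc : .inr (j, c) ∈ Kᶜ) (hc' : .inr (j, c') ∈ Kᶜ) :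
    ((attachCopies D a ι).induce Kᶜ).Reachable ⟨_, hc⟩ ⟨_, hc'⟩ := by
  set K' : Set C := (fun c => .inr (j, c)) ⁻¹' K
  have hK' : K'.ncard < Fintype.card S :=
    (Set.ncard_le_ncard_of_injOn (fun c => .inr (j, c)) (fun _ h => h)
      fun _ _ _ _ h => by simpa using h).trans_lt hK
  let f : D.induce K'ᶜ →g (attachCopies D a ι).induce Kᶜ :=
    ⟨fun c => ⟨.inr (j, c), c.2⟩, fun h => ⟨rfl, h⟩⟩
  exact (hD K' hK' (u := ⟨c, hc⟩) (v := ⟨c', hc'⟩)).map f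

theorem exists_hub_notMem [Nonempty S] (ha : Injective a) (hK : K.ncard < Fintype.card S)
    (j j' : ι) : ∃ s, .inl s ∉ K ∧ .inr (j, a s) ∉ K ∧ .inr (j', a s) ∉ K := by
  obtain ⟨s, hs⟩ := Set.exists_notMem_image_of_ncard_lt (Sum.elim id (invFun a ∘ Prod.snd))
    (by rwa [Nat.card_eq_fintype_card])
  have hinv (j : ι) : Sum.elim id (invFun a ∘ Prod.snd) (.inr (j, a s)) = s :=
    leftInverse_invFun ha s
  exact ⟨s, fun h => hs ⟨_, h, rfl⟩, fun h => hs ⟨_, h, hinv j⟩, fun h => hs ⟨_, h, hinv j'⟩⟩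

theorem attachCopies_isMConnected [Nonempty S] [Nonempty C] (ha : Injective a)
    (hι : Fintype.card S ≤ Fintype.card ι)
    (hD : ∀ K : Set C, K.ncard < Fintype.card S → (D.induce Kᶜ).Preconnected) :
    (attachCopies D a ι).IsMConnected (Fintype.card S) := by
  have hS := Fintype.card_pos (α := S)
  have : Nonempty ι := Fintype.card_pos_iff.1 (hS.trans_le hι)
  refine ⟨?_, fun K hK => ?_⟩
  · rw [Fintype.card_sum, Fintype.card_prod]
    have := Nat.mul_pos (Fintype.card_pos (α := ι)) (Fintype.card_pos (α := C))
    omega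
  set G := (attachCopies D a ι).induce Kᶜ
  have hcopies (j j' : ι) (c c' : C) (hc : .inr (j, c) ∈ Kᶜ) (hc' : .inr (j', c') ∈ Kᶜ) :
      G.Reachable ⟨_, hc⟩ ⟨_, hc'⟩ := by
    obtain ⟨s, hs, hjs, hj's⟩ := exists_hub_notMem ha hK j j'
    have h₁ : G.Adj ⟨.inr (j, a s), hjs⟩ ⟨.inl s, hs⟩ := by simp [G]
    have h₂ : G.Adj ⟨.inl s, hs⟩ ⟨.inr (j', a s), hj's⟩ := by simp [G]
    exact ((reachable_induce_attachCopies_of_copy hK hD j hc hjs).trans h₁.reachable).trans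
      (h₂.reachable.trans (reachable_induce_attachCopies_of_copy hK hD j' hj's hc'))
  have hreach_copy (u : ↥Kᶜ) : ∃ j c hc, G.Reachable u ⟨.inr (j, c), hc⟩ := by
    obtain ⟨s | ⟨j, c⟩, hu⟩ := u
    · obtain ⟨j, hj⟩ := Set.exists_notMem_image_of_ncard_lt
        (Sum.elim (fun _ => Classical.arbitrary ι) Prod.fst) (K := K)
        (by rw [Nat.card_eq_fintype_card]; omega)
      have hjs : .inr (j, a s) ∈ Kᶜ := fun h => hj ⟨_, h, rfl⟩
      exact ⟨j, a s, hjs, (show G.Adj ⟨.inl s, hu⟩ ⟨_, hjs⟩ by simp [G]).reachable⟩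
    · exact ⟨j, c, hu, .rfl⟩
  obtain ⟨s, hs, -⟩ := exists_hub_notMem ha hK (Classical.arbitrary ι) (Classical.arbitrary ι)
  refine (connected_iff _).2 ⟨fun u v => ?_, ⟨⟨.inl s, hs⟩⟩⟩
  obtain ⟨j, c, hc, hu⟩ := hreach_copy u
  obtain ⟨j', c', hc', hv⟩ := hreach_copy v
  exact (hu.trans (hcopies j j' c c' hc hc')).trans hv.symm

end Connectivity

end AttachCopies

section CycleSumMatching

def cycleSumMatching (n m : ℕ) : SimpleGraph (Fin n ⊕ Fin m × Bool) :=
  cycleGraph n ⊕g ((⊥ : SimpleGraph (Fin m)) □ ⊤)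

variable {n m : ℕ}

theorem degree_cycleSumMatching_inl (hn : 3 ≤ n) (i : Fin n) :
    (cycleSumMatching n m).degree (.inl i) = 2 := by
  rw [cycleSumMatching, degree_sum_inl, cycleGraph_degree_eq_two hn]

theorem degree_cycleSumMatching_inr (p : Fin m × Bool) :
    (cycleSumMatching n m).degree (.inr p) = 1 := by
  rw [cycleSumMatching, degree_sum_inr, degree_boxProd]
  simp

end CycleSumMatching

end SimpleGraph

open SimpleGraph in
/-- For all integers `t, r, k` with `1 ≤ t < r` and `k > t(2r+1)/(2t+1)`, there is a
`(2t+1)`-connected `(2r+1)`-regular finite simple graph with no `2k`-factor. -/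
theorem exists_connected_regular_no_2k_factor
    (t r k : ℕ) (ht : 1 ≤ t) (htr : t < r) (hk : t * (2 * r + 1) < k * (2 * t + 1)) :
    ∃ (V : Type) (_ : Fintype V) (G : SimpleGraph V),
      G.IsMConnected (2 * t + 1) ∧
      (∀ v : V, G.degree v = 2 * r + 1) ∧
      ¬ ∃ H : SimpleGraph V, H ≤ G ∧ ∀ v : V, H.degree v = 2 * k := by
  set B := cycleSumMatching (2 * t + 1) (r - t + 1)
  have hcard : Fintype.card (Fin (2 * t + 1) ⊕ Fin (r - t + 1) × Bool) = 2 * r + 3 := by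
    simp only [Fintype.card_sum, Fintype.card_prod, Fintype.card_fin, Fintype.card_bool]
    omega
  have hB (c) : B.degree c ≤ 2 := by
    rcases c with i | p
    · rw [degree_cycleSumMatching_inl (by omega)]
    · rw [degree_cycleSumMatching_inr]; omega
  refine ⟨_, inferInstance, attachCopies Bᶜ Sum.inl (Fin (2 * r + 1)), ?_, ?_, ?_⟩
  · simpa using attachCopies_isMConnected (D := Bᶜ) (ι := Fin (2 * r + 1)) Sum.inl_injective
      (by simp only [Fintype.card_fin]; omega) fun K hK =>
        preconnected_induce_compl_of_degree_le B hB (by rw [Fintype.card_fin] at hK; omega)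
  · rintro (s | ⟨j, i | p⟩)
    · simp [degree_attachCopies_inl]
    · rw [degree_attachCopies_inr, degree_compl, hcard, degree_cycleSumMatching_inl (by omega)]
      simp [filter_eq']
    · rw [degree_attachCopies_inr, degree_compl, hcard, degree_cycleSumMatching_inr]
      simp
  · rintro ⟨H, hH, hdeg⟩
    have := card_mul_le_of_regular_le_attachCopies (by simp) hH hdeg
    simp only [Fintype.card_fin, add_tsub_cancel_right] at this
    nlinarith
end
end

section
/- Let G be a finite simple graph containing an independent set T of vertices such that G−T has exactly c components, each of which is joined to T by at most 2t+1 edges. If G has a 2k-factor, then 2k·|T| ≤ 2t·c. -/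
open scoped Classical
noncomputable section

/-- One step of a walk inside the vertex set `R`. -/
def SimpleGraph.StepIn {V : Type} (G : SimpleGraph V) (R : Set V) (x y : V) : Prop :=
  x ∈ R ∧ y ∈ R ∧ G.Adj x y

/-- Reachability within the vertex set `R`. -/
def SimpleGraph.ReachIn {V : Type} (G : SimpleGraph V) (R : Set V) : V → V → Prop :=
  Relation.ReflTransGen (G.StepIn R)

/-- `C` is (the vertex set of) a component of the subgraph of `G` induced by `R`. -/
def SimpleGraph.IsCompOf {V : Type} (G : SimpleGraph V) (R C : Set V) : Prop :=
  ∃ v ∈ R, C = {w | G.ReachIn R v w}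

/-- The number of edges of `G` with one endpoint in `A` and the other in `B`
(for disjoint `A` and `B`). -/
def SimpleGraph.edgesBetween {V : Type} (G : SimpleGraph V) (A B : Set V) : ℕ :=
  Nat.card {p : V × V // p.1 ∈ A ∧ p.2 ∈ B ∧ G.Adj p.1 p.2}

/-!
Count the edges of the `2k`-factor `H` between `T` and its complement. Since `T` is
independent, every `H`-edge at a vertex of `T` leaves `T`, so there are exactly `2k·|T|` of
them. On the other hand, each component `C` of `G − T` has all its `H`-neighbours outside `C`
in `T`, so the `H`-edges between `C` and `T` form the edge cut of `C` in the even graph `H`;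
their number is even and at most `2t + 1`, hence at most `2t`. Summing over the `c`
components gives `2k·|T| ≤ 2t·c`.
-/

namespace SimpleGraph

section Components

variable {V : Type} {G : SimpleGraph V} {R C : Set V} {x y : V}

instance : Std.Symm (G.StepIn R) := ⟨fun _ _ ⟨hx, hy, hxy⟩ => ⟨hy, hx, hxy.symm⟩⟩

lemma reachIn_symm (h : G.ReachIn R x y) : G.ReachIn R y x :=
  Relation.ReflTransGen.stdSymm.symm _ _ h

lemma mem_of_reachIn (hx : x ∈ R) (h : G.ReachIn R x y) : y ∈ R := by
  rcases Relation.ReflTransGen.cases_tail h with rfl | ⟨_, _, hz⟩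
  · exact hx
  · exact hz.2.1

lemma isCompOf_reachIn (hx : x ∈ R) : G.IsCompOf R {w | G.ReachIn R x w} := ⟨x, hx, rfl⟩

lemma IsCompOf.subset (hC : G.IsCompOf R C) : C ⊆ R := by
  obtain ⟨v, hv, rfl⟩ := hC
  exact fun _ hw => mem_of_reachIn hv hw

lemma IsCompOf.eq_reachIn (hC : G.IsCompOf R C) (hx : x ∈ C) :
    C = {w | G.ReachIn R x w} := by
  obtain ⟨v, -, rfl⟩ := hC
  ext w
  exact ⟨(reachIn_symm hx).trans, hx.trans⟩

lemma IsCompOf.mem_of_adj (hC : G.IsCompOf R C) (hx : x ∈ C) (hy : y ∈ R)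
    (hxy : G.Adj x y) : y ∈ C := by
  obtain ⟨v, hv, rfl⟩ := hC
  exact hx.tail ⟨mem_of_reachIn hv hx, hy, hxy⟩

end Components

section EdgesBetween

variable {V : Type} {G H : SimpleGraph V} {A B R : Set V}

lemma edgesBetween_comm : H.edgesBetween A B = H.edgesBetween B A :=
  Nat.card_congr
    { toFun := fun p => ⟨p.1.swap, p.2.2.1, p.2.1, p.2.2.2.symm⟩
      invFun := fun p => ⟨p.1.swap, p.2.2.1, p.2.1, p.2.2.2.symm⟩
      left_inv := fun _ => rfl
      right_inv := fun _ => rfl }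

lemma edgesBetween_mono [Finite V] (hHG : H ≤ G) : H.edgesBetween A B ≤ G.edgesBetween A B :=
  Nat.card_le_card_of_injective
    (Subtype.map id fun _ hp => ⟨hp.1, hp.2.1, hHG hp.2.2⟩)
    (Subtype.map_injective _ Function.injective_id)

lemma edgesBetween_congr_right {B' : Set V}
    (h : ∀ x ∈ A, ∀ y, H.Adj x y → (y ∈ B ↔ y ∈ B')) :
    H.edgesBetween A B = H.edgesBetween A B' :=
  Nat.card_congr <| Equiv.subtypeEquivRight fun _ =>
    ⟨fun ⟨hA, hB, hp⟩ => ⟨hA, (h _ hA _ hp).1 hB, hp⟩,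
     fun ⟨hA, hB', hp⟩ => ⟨hA, (h _ hA _ hp).2 hB', hp⟩⟩

lemma even_edgesBetween_self [Fintype V] : Even (H.edgesBetween A A) := by
  let K : SimpleGraph V :=
    { Adj := fun x y => x ∈ A ∧ y ∈ A ∧ H.Adj x y
      symm := ⟨fun _ _ ⟨hx, hy, h⟩ => ⟨hy, hx, h.symm⟩⟩
      loopless := ⟨fun _ ⟨_, _, h⟩ => H.irrefl h⟩ }
  have e : {p : V × V // p.1 ∈ A ∧ p.2 ∈ A ∧ H.Adj p.1 p.2} ≃ K.Dart :=
    ⟨fun p => ⟨p.1, p.2⟩, fun d => ⟨d.toProd, d.adj⟩, fun _ => rfl, fun _ => rfl⟩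
  rw [edgesBetween, Nat.card_congr e, Nat.card_eq_fintype_card,
    dart_card_eq_twice_card_edges]
  exact even_two_mul _

lemma edgesBetween_add_edgesBetween_compl [Fintype V] :
    H.edgesBetween A B + H.edgesBetween A Bᶜ = ∑ v : A, H.degree v := by
  have hdarts : Nat.card {p : V × V // p.1 ∈ A ∧ H.Adj p.1 p.2} = ∑ v : A, H.degree v := by
    have e : {p : V × V // p.1 ∈ A ∧ H.Adj p.1 p.2} ≃ Σ v : A, H.neighborSet v :=
      ⟨fun p => ⟨⟨p.1.1, p.2.1⟩, ⟨p.1.2, p.2.2⟩⟩, fun q => ⟨(q.1, q.2), q.1.2, q.2.2⟩,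
        fun _ => rfl, fun _ => rfl⟩
    simp only [Nat.card_congr e, Nat.card_eq_fintype_card, Fintype.card_sigma,
      card_neighborSet_eq_degree]
  have hsplit : {p : V × V | p.1 ∈ A ∧ H.Adj p.1 p.2} =
      {p | p.1 ∈ A ∧ p.2 ∈ B ∧ H.Adj p.1 p.2} ∪ {p | p.1 ∈ A ∧ p.2 ∈ Bᶜ ∧ H.Adj p.1 p.2} := by
    ext p
    by_cases hp : p.2 ∈ B <;> simp [hp]
  have hdisj : Disjoint {p : V × V | p.1 ∈ A ∧ p.2 ∈ B ∧ H.Adj p.1 p.2}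
      {p | p.1 ∈ A ∧ p.2 ∈ Bᶜ ∧ H.Adj p.1 p.2} :=
    Set.disjoint_left.2 fun _ hB hBc => hBc.2.1 hB.2.1
  have hcard := Set.ncard_union_eq hdisj
  rw [← hsplit] at hcard
  simp only [← Nat.card_coe_set_eq] at hcard
  exact hcard.symm.trans hdarts

lemma even_edgesBetween_compl [Fintype V] (hH : ∀ v, Even (H.degree v)) :
    Even (H.edgesBetween A Aᶜ) := by
  have hsum : Even (H.edgesBetween A A + H.edgesBetween A Aᶜ) := by
    rw [edgesBetween_add_edgesBetween_compl]
    exact Finset.even_sum _ fun v _ => hH v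
  exact (Nat.even_add.1 hsum).1 even_edgesBetween_self

lemma edgesBetween_compl_eq_mul_ncard [Fintype V] {d : ℕ} (hH : H.IsRegularOfDegree d)
    (hB : ∀ a ∈ B, ∀ b ∈ B, ¬ H.Adj a b) : H.edgesBetween Bᶜ B = d * B.ncard := by
  have hinner : H.edgesBetween B B = 0 :=
    haveI : IsEmpty _ := ⟨fun p : {p : V × V // p.1 ∈ B ∧ p.2 ∈ B ∧ H.Adj p.1 p.2} =>
      hB _ p.2.1 _ p.2.2.1 p.2.2.2⟩
    Nat.card_of_isEmpty
  have hsum := edgesBetween_add_edgesBetween_compl (H := H) (A := B) (B := B)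
  rw [hinner, zero_add, Finset.sum_congr rfl fun (v : B) _ => hH v, Finset.sum_const,
    Finset.card_univ, smul_eq_mul, ← Nat.card_eq_fintype_card, Nat.card_coe_set_eq] at hsum
  rw [edgesBetween_comm, hsum, mul_comm]

lemma edgesBetween_eq_sum_isCompOf [Fintype V] :
    H.edgesBetween R B = ∑ C : {C // G.IsCompOf R C}, H.edgesBetween C B := by
  let comp : {p : V × V // p.1 ∈ R ∧ p.2 ∈ B ∧ H.Adj p.1 p.2} → {C // G.IsCompOf R C} :=
    fun p => ⟨{w | G.ReachIn R p.1.1 w}, isCompOf_reachIn p.2.1⟩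
  rw [edgesBetween, Nat.card_congr (Equiv.sigmaFiberEquiv comp).symm,
    Nat.card_eq_fintype_card, Fintype.card_sigma]
  refine Finset.sum_congr rfl fun C _ => ?_
  rw [edgesBetween, ← Nat.card_eq_fintype_card]
  have hmem (q : {p // comp p = C}) : q.1.1.1 ∈ C.1 :=
    congrArg Subtype.val q.2 ▸ Relation.ReflTransGen.refl
  exact Nat.card_congr
    { toFun := fun q => ⟨q.1.1, hmem q, q.1.2.2⟩
      invFun := fun p => ⟨⟨p.1, C.2.subset p.2.1, p.2.2⟩,
        Subtype.ext (C.2.eq_reachIn p.2.1).symm⟩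
      left_inv := fun _ => rfl
      right_inv := fun _ => rfl }

lemma IsCompOf.even_edgesBetween_compl [Fintype V] {C : Set V} (hHG : H ≤ G)
    (hH : ∀ v, Even (H.degree v)) (hC : G.IsCompOf R C) : Even (H.edgesBetween C Rᶜ) := by
  rw [edgesBetween_congr_right (B' := Cᶜ)]
  · exact SimpleGraph.even_edgesBetween_compl hH
  · exact fun x hx y hxy => not_congr
      ⟨fun hy => hC.mem_of_adj hx hy (hHG hxy), fun hy => hC.subset hy⟩

end EdgesBetween

end SimpleGraph

theorem two_k_T_le_of_factor_general
    {V : Type} [Fintype V] (G : SimpleGraph V) (T : Set V) (t k c : ℕ)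
    (hT : ∀ a ∈ T, ∀ b ∈ T, ¬ G.Adj a b)
    (hc : Nat.card {C : Set V // G.IsCompOf Tᶜ C} = c)
    (hbound : ∀ C : Set V, G.IsCompOf Tᶜ C → G.edgesBetween C T ≤ 2 * t + 1)
    (hfac : ∃ H : SimpleGraph V, H ≤ G ∧ ∀ v : V, H.degree v = 2 * k) :
    2 * k * T.ncard ≤ 2 * t * c := by
  obtain ⟨H, hHG, hdeg⟩ := hfac
  have hcomp (C : {C // G.IsCompOf Tᶜ C}) : H.edgesBetween C T ≤ 2 * t := by
    have heven := C.2.even_edgesBetween_compl hHG fun v => hdeg v ▸ even_two_mul k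
    rw [compl_compl] at heven
    have hle := (SimpleGraph.edgesBetween_mono hHG).trans (hbound C C.2)
    obtain ⟨m, hm⟩ := heven
    omega
  have hTH : ∀ a ∈ T, ∀ b ∈ T, ¬ H.Adj a b := fun a ha b hb hab => hT a ha b hb (hHG hab)
  calc 2 * k * T.ncard = H.edgesBetween Tᶜ T :=
        (SimpleGraph.edgesBetween_compl_eq_mul_ncard hdeg hTH).symm
    _ = ∑ C : {C // G.IsCompOf Tᶜ C}, H.edgesBetween C T :=
        SimpleGraph.edgesBetween_eq_sum_isCompOf
    _ ≤ ∑ _C : {C // G.IsCompOf Tᶜ C}, 2 * t := Finset.sum_le_sum fun C _ => hcomp C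
    _ = 2 * t * c := by
      rw [Finset.sum_const, Finset.card_univ, smul_eq_mul, ← Nat.card_eq_fintype_card, hc,
        mul_comm]

/-- If a finite simple graph `G` has an independent set `T` such that `G−T` has exactly
`c` components, each joined to `T` by at most `2t+1` edges, and `G` has a `2k`-factor,
then `2k·|T| ≤ 2t·c`. -/
theorem two_k_T_le_of_factor
    {V : Type} [Fintype V] (G : SimpleGraph V) (T : Set V) (t k c : ℕ) (hk : 0 < k)
    (hT : ∀ a ∈ T, ∀ b ∈ T, ¬ G.Adj a b)
    (hc : Nat.card {C : Set V // G.IsCompOf Tᶜ C} = c)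
    (hbound : ∀ C : Set V, G.IsCompOf Tᶜ C → G.edgesBetween C T ≤ 2 * t + 1)
    (hfac : ∃ H : SimpleGraph V, H ≤ G ∧ ∀ v : V, H.degree v = 2 * k) :
    2 * k * T.ncard ≤ 2 * t * c :=
  two_k_T_le_of_factor_general G T t k c hT hc hbound hfac
end
end

section
/- For integers t, r with 1 ≤ t < r, let H be the complement of the disjoint union of a cycle C_{2t+1} and r−t+1 copies of K_2 (so H has 2r+3 vertices). Let G be the simple graph formed from the disjoint union of 2r+1 copies of H together with an additional independent set T of 2t+1 new vertices, by adding, for each copy of H, a perfect matching between T and the 2t+1 vertices of that copy that came from the deleted cycle. Then G is (2r+1)-regular and (2t+1)-connected. -/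
open scoped Classical
noncomputable section

/-- Vertices of `H`: the `2t+1` vertices of the deleted cycle, together with `r−t+1`
pairs forming the deleted copies of `K₂`. -/
abbrev HVert (t r : ℕ) : Type := Fin (2 * t + 1) ⊕ (Fin (r - t + 1) × Fin 2)

/-- The deleted graph: a `(2t+1)`-cycle on the first block and `r−t+1` disjoint copies
of `K₂` on the second block. -/
def delRel (t r : ℕ) : HVert t r → HVert t r → Prop
  | Sum.inl i, Sum.inl j => i + 1 = j
  | Sum.inr p, Sum.inr q => p.1 = q.1
  | _, _ => False

/-- `H`: the complement of the disjoint union of `C_{2t+1}` and `(r−t+1)K₂`. -/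
def Hgraph (t r : ℕ) : SimpleGraph (HVert t r) :=
  (SimpleGraph.fromRel (delRel t r))ᶜ

/-- Vertices of `G`: `2r+1` copies of `H` plus a set `T` of `2t+1` new vertices. -/
abbrev GVert (t r : ℕ) : Type := (Fin (2 * r + 1) × HVert t r) ⊕ Fin (2 * t + 1)

/-- Edges of `G`: each copy of `H`, plus a perfect matching joining the `j`-th vertex
of `T` to the `j`-th cycle vertex of each copy of `H`. -/
def Grel (t r : ℕ) : GVert t r → GVert t r → Prop
  | Sum.inl (c, u), Sum.inl (c', u') => c = c' ∧ (Hgraph t r).Adj u u'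
  | Sum.inl (_, u), Sum.inr j => u = Sum.inl j
  | _, _ => False

/-- The graph `G` built from `2r+1` copies of `H` and the independent set `T`. -/
def Ggraph (t r : ℕ) : SimpleGraph (GVert t r) :=
  SimpleGraph.fromRel (Grel t r)

/-! ### Auxiliary lemmas -/

section Aux
variable {t r : ℕ}

lemma card_HVert (t r : ℕ) : Fintype.card (HVert t r) = 2*t+1 + (r-t+1)*2 := by
  simp [Fintype.card_sum, Fintype.card_prod]

lemma Hadj_iff (u v : HVert t r) :
    (Hgraph t r).Adj u v ↔ u ≠ v ∧ ¬ delRel t r u v ∧ ¬ delRel t r v u := by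
  simp only [Hgraph, SimpleGraph.compl_adj, SimpleGraph.fromRel_adj]
  tauto

lemma Hadj_of {u w : HVert t r} (h1 : u ≠ w) (h2 : ¬ delRel t r u w)
    (h3 : ¬ delRel t r w u) : (Hgraph t r).Adj u w :=
  (Hadj_iff u w).mpr ⟨h1, h2, h3⟩

/-! #### `Fin` facts -/

lemma fin_ne_add_one (ht : 1 ≤ t) (i : Fin (2*t+1)) : i ≠ i + 1 := by
  intro h
  have h1 : (1 : Fin (2*t+1)) = 0 := left_eq_add.mp h
  have := congrArg Fin.val h1
  rw [Fin.val_one', Fin.val_zero, Nat.mod_eq_of_lt (by omega)] at this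
  omega

lemma fin_ne_sub_one (ht : 1 ≤ t) (i : Fin (2*t+1)) : i ≠ i - 1 := by
  intro h
  have h1 : (1 : Fin (2*t+1)) = 0 := sub_eq_self.mp h.symm
  have := congrArg Fin.val h1
  rw [Fin.val_one', Fin.val_zero, Nat.mod_eq_of_lt (by omega)] at this
  omega

lemma fin_add_ne_sub (ht : 1 ≤ t) (i : Fin (2*t+1)) : i + 1 ≠ i - 1 := by
  intro h
  have h2 : i + (1 + 1) = i := by
    have := congrArg (· + 1) h
    simp only [sub_add_cancel] at this
    rw [← add_assoc]; exact this
  have h1 : ((1 : Fin (2*t+1)) + 1) = 0 := add_eq_left.mp h2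
  have := congrArg Fin.val h1
  rw [Fin.val_add, Fin.val_one', Fin.val_zero, Nat.mod_eq_of_lt (show 1 < 2*t+1 by omega),
    Nat.mod_eq_of_lt (show 1+1 < 2*t+1 by omega)] at this
  omega

lemma fin2_eq {p q s : Fin 2} (h1 : p ≠ q) (h2 : s ≠ p) : s = q := by
  have := p.isLt; have := q.isLt; have := s.isLt
  rw [Fin.ext_iff] at *
  omega

/-! #### `delRel` characterizations -/

lemma del_inl_iff (i : Fin (2*t+1)) (w : HVert t r) :
    delRel t r (Sum.inl i) w ↔ w = Sum.inl (i+1) := by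
  cases w with
  | inl k => simp only [delRel, Sum.inl.injEq]; exact eq_comm
  | inr p => simp [delRel]

lemma del_to_inl_iff (i : Fin (2*t+1)) (w : HVert t r) :
    delRel t r w (Sum.inl i) ↔ w = Sum.inl (i-1) := by
  cases w with
  | inl k =>
    simp only [delRel, Sum.inl.injEq]
    exact eq_sub_iff_add_eq.symm
  | inr p => simp [delRel]

lemma del_inr (p : Fin (r-t+1) × Fin 2) (w : HVert t r)
    (h : delRel t r (Sum.inr p) w ∨ delRel t r w (Sum.inr p)) :
    ∃ s, w = Sum.inr s ∧ s.1 = p.1 := by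
  cases w with
  | inl k => simp [delRel] at h
  | inr s =>
    refine ⟨s, rfl, ?_⟩
    simp only [delRel] at h
    tauto

/-! #### Finding vertices avoiding a small set -/

lemma exists_avoid {α : Type} [Fintype α] {A : Set α} (h5 : 5 ≤ A.ncard) (a b c d : α) :
    ∃ w ∈ A, w ≠ a ∧ w ≠ b ∧ w ≠ c ∧ w ≠ d := by
  by_contra hcon
  push_neg at hcon
  have hsub : A ⊆ ({a, b, c, d} : Set α) := by
    intro w hw
    have := hcon w hw
    simp only [Set.mem_insert_iff, Set.mem_singleton_iff]
    by_cases h1 : w = a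
    · tauto
    by_cases h2 : w = b
    · tauto
    by_cases h3 : w = c
    · tauto
    tauto
  have hle := Set.ncard_le_ncard hsub (Set.toFinite _)
  have h4 : ({a,b,c,d} : Set α).ncard ≤ 4 := by
    refine le_trans (Set.ncard_insert_le _ _) ?_
    have := Set.ncard_insert_le b ({c,d} : Set α)
    have := Set.ncard_insert_le c ({d} : Set α)
    simp [Set.ncard_singleton] at *
    omega
  omega

/-! #### Common-neighbor lemma in `H` -/

lemma exists_mid_aux (ht : 1 ≤ t) {A : Set (HVert t r)} (h5 : 5 ≤ A.ncard)
    {u v : HVert t r} (hne : u ≠ v) (hdel : delRel t r u v) :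
    ∃ w ∈ A, (Hgraph t r).Adj u w ∧ (Hgraph t r).Adj w v := by
  cases u with
  | inl i =>
    cases v with
    | inl j =>
      have hij : i + 1 = j := hdel
      obtain ⟨w, hwA, hw1, hw2, hw3, hw4⟩ :=
        exists_avoid h5 (Sum.inl i : HVert t r) (Sum.inl j) (Sum.inl (i-1)) (Sum.inl (j+1))
      refine ⟨w, hwA, Hadj_of (Ne.symm hw1) ?_ ?_, Hadj_of hw2 ?_ ?_⟩
      · intro h
        rw [del_inl_iff] at h
        rw [hij] at h
        exact hw2 h
      · intro h
        rw [del_to_inl_iff] at h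
        exact hw3 h
      · intro h
        rw [del_to_inl_iff] at h
        have : j - 1 = i := (eq_sub_iff_add_eq.mpr hij).symm
        rw [this] at h
        exact hw1 h
      · intro h
        rw [del_inl_iff] at h
        exact hw4 h
    | inr q => exact absurd hdel (by simp [delRel])
  | inr p =>
    cases v with
    | inl j => exact absurd hdel (by simp [delRel])
    | inr q =>
      have hpq1 : p.1 = q.1 := hdel
      have hpq : p ≠ q := fun h => hne (by rw [h])
      have hp2 : p.2 ≠ q.2 := fun h => hpq (Prod.ext hpq1 h)
      obtain ⟨w, hwA, hw1, hw2, _, _⟩ :=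
        exists_avoid h5 (Sum.inr p : HVert t r) (Sum.inr q) (Sum.inr p) (Sum.inr q)
      have key : ∀ x : HVert t r,
          (delRel t r (Sum.inr p) x ∨ delRel t r x (Sum.inr p)) ∨
          (delRel t r (Sum.inr q) x ∨ delRel t r x (Sum.inr q)) →
          x = Sum.inr p ∨ x = Sum.inr q := by
        intro x hx
        rcases hx with hx | hx
        · obtain ⟨s, rfl, hs⟩ := del_inr p x hx
          by_cases h : s.2 = p.2
          · exact Or.inl (by rw [Prod.ext hs h])
          · have h2 : s.2 = q.2 := fin2_eq hp2 h
            exact Or.inr (by rw [Prod.ext (hs.trans hpq1) h2])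
        · obtain ⟨s, rfl, hs⟩ := del_inr q x hx
          by_cases h : s.2 = q.2
          · exact Or.inr (by rw [Prod.ext hs h])
          · have h2 : s.2 = p.2 := fin2_eq (Ne.symm hp2) h
            exact Or.inl (by rw [Prod.ext (hs.trans hpq1.symm) h2])
      refine ⟨w, hwA, Hadj_of (Ne.symm hw1) ?_ ?_, Hadj_of hw2 ?_ ?_⟩
      · intro h
        rcases key w (Or.inl (Or.inl h)) with h' | h'
        · exact hw1 h'
        · exact hw2 h'
      · intro h
        rcases key w (Or.inl (Or.inr h)) with h' | h'
        · exact hw1 h'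
        · exact hw2 h'
      · intro h
        rcases key w (Or.inr (Or.inr h)) with h' | h'
        · exact hw1 h'
        · exact hw2 h'
      · intro h
        rcases key w (Or.inr (Or.inl h)) with h' | h'
        · exact hw1 h'
        · exact hw2 h'

lemma exists_mid (ht : 1 ≤ t) {A : Set (HVert t r)} (h5 : 5 ≤ A.ncard)
    {u v : HVert t r} (hne : u ≠ v) (hnadj : ¬ (Hgraph t r).Adj u v) :
    ∃ w ∈ A, (Hgraph t r).Adj u w ∧ (Hgraph t r).Adj w v := by
  have hdel : delRel t r u v ∨ delRel t r v u := by
    have := Hadj_iff u v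
    tauto
  rcases hdel with hdel | hdel
  · exact exists_mid_aux ht h5 hne hdel
  · obtain ⟨w, hwA, h1, h2⟩ := exists_mid_aux ht h5 (Ne.symm hne) hdel
    exact ⟨w, hwA, h2.symm, h1.symm⟩

/-! #### Adjacency in `G` -/

lemma Gadj_inl_inl (c c' : Fin (2*r+1)) (u u' : HVert t r) :
    (Ggraph t r).Adj (Sum.inl (c,u)) (Sum.inl (c',u')) ↔ c = c' ∧ (Hgraph t r).Adj u u' := by
  simp only [Ggraph, SimpleGraph.fromRel_adj]
  constructor
  · rintro ⟨hne, h | h⟩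
    · exact h
    · obtain ⟨h1, h2⟩ := (h : c' = c ∧ (Hgraph t r).Adj u' u)
      exact ⟨h1.symm, h2.symm⟩
  · rintro ⟨rfl, h⟩
    exact ⟨by simp [h.ne], Or.inl ⟨rfl, h⟩⟩

lemma Gadj_inl_inr (c : Fin (2*r+1)) (u : HVert t r) (j : Fin (2*t+1)) :
    (Ggraph t r).Adj (Sum.inl (c,u)) (Sum.inr j) ↔ u = Sum.inl j := by
  simp only [Ggraph, SimpleGraph.fromRel_adj]
  constructor
  · rintro ⟨hne, h | h⟩
    · exact h
    · exact absurd h (by simp [Grel])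
  · rintro rfl
    exact ⟨by simp, Or.inl rfl⟩

lemma Gadj_inr_inl (c : Fin (2*r+1)) (u : HVert t r) (j : Fin (2*t+1)) :
    (Ggraph t r).Adj (Sum.inr j) (Sum.inl (c,u)) ↔ u = Sum.inl j := by
  rw [SimpleGraph.adj_comm]
  exact Gadj_inl_inr c u j

lemma Gadj_inr_inr (j j' : Fin (2*t+1)) :
    ¬ (Ggraph t r).Adj (Sum.inr j) (Sum.inr j') := by
  rintro ⟨hne, h | h⟩ <;> exact h

/-! #### Degrees -/

lemma deg_eq_ncard {V : Type} [Fintype V] (G : SimpleGraph V) (v : V) :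
    G.degree v = (G.neighborSet v).ncard := by
  simp [SimpleGraph.degree, SimpleGraph.neighborFinset, Set.ncard_eq_toFinset_card']

lemma Hns_inl (ht : 1 ≤ t) (htr : t < r) (i : Fin (2*t+1)) :
    ((Hgraph t r).neighborSet (Sum.inl i)).ncard = 2*r := by
  have hset : (Hgraph t r).neighborSet (Sum.inl i) =
      ({Sum.inl i, Sum.inl (i+1), Sum.inl (i-1)} : Set (HVert t r))ᶜ := by
    ext w
    simp only [SimpleGraph.mem_neighborSet, Hadj_iff, del_inl_iff, del_to_inl_iff,
      Set.mem_compl_iff, Set.mem_insert_iff, Set.mem_singleton_iff]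
    constructor
    · rintro ⟨h1, h2, h3⟩
      rintro (rfl | rfl | rfl)
      · exact h1 rfl
      · exact h2 rfl
      · exact h3 rfl
    · intro h
      push_neg at h
      exact ⟨fun hh => h.1 hh.symm, h.2.1, h.2.2⟩
  rw [hset]
  have h3 : ({Sum.inl i, Sum.inl (i+1), Sum.inl (i-1)} : Set (HVert t r)).ncard = 3 := by
    rw [Set.ncard_insert_of_notMem (by
        simp only [Set.mem_insert_iff, Set.mem_singleton_iff, Sum.inl.injEq]
        push_neg
        exact ⟨fin_ne_add_one ht i, fin_ne_sub_one ht i⟩) (Set.toFinite _),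
      Set.ncard_insert_of_notMem (by
        simp only [Set.mem_singleton_iff, Sum.inl.injEq]
        exact fin_add_ne_sub ht i) (Set.toFinite _),
      Set.ncard_singleton]
  have hcompl := Set.ncard_add_ncard_compl
    ({Sum.inl i, Sum.inl (i+1), Sum.inl (i-1)} : Set (HVert t r))
  rw [Nat.card_eq_fintype_card, card_HVert] at hcompl
  omega

lemma Hns_inr (ht : 1 ≤ t) (htr : t < r) (p : Fin (r-t+1) × Fin 2) :
    ((Hgraph t r).neighborSet (Sum.inr p)).ncard = 2*r+1 := by
  have hp2 : p.2 ≠ 1 - p.2 := by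
    intro h
    have := p.2.isLt
    rw [Fin.ext_iff, Fin.sub_def] at h
    simp at h
    omega
  have hset : (Hgraph t r).neighborSet (Sum.inr p) =
      ({Sum.inr p, Sum.inr (p.1, 1 - p.2)} : Set (HVert t r))ᶜ := by
    ext w
    simp only [SimpleGraph.mem_neighborSet, Hadj_iff,
      Set.mem_compl_iff, Set.mem_insert_iff, Set.mem_singleton_iff]
    cases w with
    | inl k =>
      simp only [delRel]
      constructor
      · intro _
        rintro (h | h) <;> exact absurd h (by simp)
      · intro _
        refine ⟨by simp, not_false, not_false⟩
    | inr s =>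
      constructor
      · rintro ⟨h1, h2, h3⟩
        rintro (h | h)
        · exact h1 h.symm
        · rw [Sum.inr.injEq] at h
          exact h3 (show s.1 = p.1 by rw [h])
      · intro h
        push_neg at h
        obtain ⟨h1, h2⟩ := h
        have hs1 : s.1 ≠ p.1 := by
          intro hfst
          by_cases hsnd : s.2 = p.2
          · exact h1 (by rw [Prod.ext hfst hsnd])
          · have h3 : s.2 = 1 - p.2 := fin2_eq hp2 hsnd
            have hq : s = (p.1, 1 - p.2) := Prod.ext hfst h3
            exact h2 (by rw [hq])
        refine ⟨fun hh => h1 hh.symm, ?_, ?_⟩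
        · simp only [delRel]
          exact fun hh => hs1 hh.symm
        · simp only [delRel]
          exact hs1
  rw [hset]
  have h2 : ({Sum.inr p, Sum.inr (p.1, 1 - p.2)} : Set (HVert t r)).ncard = 2 := by
    rw [Set.ncard_insert_of_notMem (by
        simp only [Set.mem_singleton_iff, Sum.inr.injEq]
        intro h
        exact hp2 (congrArg Prod.snd h)) (Set.toFinite _),
      Set.ncard_singleton]
  have hcompl := Set.ncard_add_ncard_compl
    ({Sum.inr p, Sum.inr (p.1, 1 - p.2)} : Set (HVert t r))
  rw [Nat.card_eq_fintype_card, card_HVert] at hcompl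
  omega

lemma inl_c_injective (c : Fin (2*r+1)) :
    Function.Injective (fun w : HVert t r => (Sum.inl (c, w) : GVert t r)) := by
  intro a b h
  simpa using h

lemma Gdeg_inr (ht : 1 ≤ t) (htr : t < r) (j : Fin (2*t+1)) :
    (Ggraph t r).degree (Sum.inr j) = 2*r+1 := by
  rw [deg_eq_ncard]
  have hset : (Ggraph t r).neighborSet (Sum.inr j) =
      Set.range (fun c : Fin (2*r+1) => (Sum.inl (c, Sum.inl j) : GVert t r)) := by
    ext x
    cases x with
    | inl cu =>
      obtain ⟨c, u⟩ := cu
      simp only [SimpleGraph.mem_neighborSet, Gadj_inr_inl, Set.mem_range, Sum.inl.injEq,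
        Prod.mk.injEq]
      constructor
      · rintro rfl; exact ⟨c, rfl, rfl⟩
      · rintro ⟨c', rfl, rfl⟩; rfl
    | inr j' =>
      simp only [SimpleGraph.mem_neighborSet, Set.mem_range]
      constructor
      · intro h; exact absurd h (Gadj_inr_inr j j')
      · rintro ⟨c, h⟩; exact absurd h (by simp)
  rw [hset, ← Set.image_univ, Set.ncard_image_of_injective _ (by
      intro a b h; simpa using h : Function.Injective
        (fun c : Fin (2*r+1) => (Sum.inl (c, Sum.inl j) : GVert t r))),
    Set.ncard_univ, Nat.card_eq_fintype_card, Fintype.card_fin]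

lemma Gdeg_inl_inr (ht : 1 ≤ t) (htr : t < r) (c : Fin (2*r+1)) (p : Fin (r-t+1) × Fin 2) :
    (Ggraph t r).degree (Sum.inl (c, Sum.inr p)) = 2*r+1 := by
  rw [deg_eq_ncard]
  have hset : (Ggraph t r).neighborSet (Sum.inl (c, Sum.inr p)) =
      (fun w : HVert t r => (Sum.inl (c, w) : GVert t r)) ''
        (Hgraph t r).neighborSet (Sum.inr p) := by
    ext x
    cases x with
    | inl cu =>
      obtain ⟨c', u'⟩ := cu
      simp only [SimpleGraph.mem_neighborSet, Gadj_inl_inl, Set.mem_image, Sum.inl.injEq,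
        Prod.mk.injEq]
      constructor
      · rintro ⟨rfl, h⟩; exact ⟨u', h, rfl, rfl⟩
      · rintro ⟨w, hw, rfl, rfl⟩; exact ⟨rfl, hw⟩
    | inr j =>
      simp only [SimpleGraph.mem_neighborSet, Gadj_inl_inr, Set.mem_image]
      constructor
      · intro h; exact absurd h (by simp)
      · rintro ⟨w, _, h⟩; exact absurd h (by simp)
  rw [hset, Set.ncard_image_of_injective _ (inl_c_injective c), Hns_inr ht htr]

lemma Gdeg_inl_inl (ht : 1 ≤ t) (htr : t < r) (c : Fin (2*r+1)) (i : Fin (2*t+1)) :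
    (Ggraph t r).degree (Sum.inl (c, Sum.inl i)) = 2*r+1 := by
  rw [deg_eq_ncard]
  have hset : (Ggraph t r).neighborSet (Sum.inl (c, Sum.inl i)) =
      insert (Sum.inr i : GVert t r)
        ((fun w : HVert t r => (Sum.inl (c, w) : GVert t r)) ''
          (Hgraph t r).neighborSet (Sum.inl i)) := by
    ext x
    cases x with
    | inl cu =>
      obtain ⟨c', u'⟩ := cu
      simp only [SimpleGraph.mem_neighborSet, Gadj_inl_inl, Set.mem_insert_iff, Set.mem_image,
        Sum.inl.injEq, Prod.mk.injEq]
      constructor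
      · rintro ⟨rfl, h⟩; exact Or.inr ⟨u', h, rfl, rfl⟩
      · rintro (h | ⟨w, hw, rfl, rfl⟩)
        · exact absurd h (by simp)
        · exact ⟨rfl, hw⟩
    | inr j =>
      simp only [SimpleGraph.mem_neighborSet, Gadj_inl_inr, Set.mem_insert_iff, Set.mem_image,
        Sum.inl.injEq, Sum.inr.injEq]
      constructor
      · intro h
        exact Or.inl h.symm
      · rintro (rfl | ⟨w, _, h⟩)
        · rfl
        · exact absurd h (by simp)
  rw [hset, Set.ncard_insert_of_notMem (by
      rintro ⟨w, _, h⟩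
      exact absurd h (by simp)) (Set.toFinite _),
    Set.ncard_image_of_injective _ (inl_c_injective c), Hns_inl ht htr]

/-! #### Reachability within a copy -/

lemma exists_notMem_of_ncard_lt {α : Type} [Fintype α] (s : Set α)
    (h : s.ncard < Fintype.card α) : ∃ x, x ∉ s := by
  by_contra hc
  push_neg at hc
  have : s = Set.univ := Set.eq_univ_of_forall hc
  rw [this, Set.ncard_univ, Nat.card_eq_fintype_card] at h
  omega

lemma reach_in_copy (ht : 1 ≤ t) (htr : t < r) (K : Set (GVert t r)) (hK : K.ncard ≤ 2*t)
    (c : Fin (2*r+1)) (u v : HVert t r) (hu : Sum.inl (c,u) ∈ Kᶜ) (hv : Sum.inl (c,v) ∈ Kᶜ) :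
    ((Ggraph t r).induce Kᶜ).Reachable ⟨Sum.inl (c,u), hu⟩ ⟨Sum.inl (c,v), hv⟩ := by
  set A : Set (HVert t r) := {w | Sum.inl (c,w) ∈ Kᶜ} with hA
  have h5 : 5 ≤ A.ncard := by
    have h1 : (Aᶜ).ncard = ((fun w : HVert t r => (Sum.inl (c,w) : GVert t r)) '' Aᶜ).ncard :=
      (Set.ncard_image_of_injective _ (inl_c_injective c)).symm
    have h2 : ((fun w : HVert t r => (Sum.inl (c,w) : GVert t r)) '' Aᶜ) ⊆ K := by
      rintro x ⟨w, hw, rfl⟩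
      simp only [hA, Set.mem_compl_iff, Set.mem_setOf_eq, not_not] at hw
      exact hw
    have h3 : (Aᶜ).ncard ≤ K.ncard := h1 ▸ Set.ncard_le_ncard h2 (Set.toFinite _)
    have h4 := Set.ncard_add_ncard_compl A
    rw [Nat.card_eq_fintype_card, card_HVert] at h4
    omega
  have step : ∀ (a b : HVert t r) (ha : Sum.inl (c,a) ∈ Kᶜ) (hb : Sum.inl (c,b) ∈ Kᶜ),
      (Hgraph t r).Adj a b →
      ((Ggraph t r).induce Kᶜ).Reachable ⟨Sum.inl (c,a), ha⟩ ⟨Sum.inl (c,b), hb⟩ := by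
    intro a b ha hb hab
    exact SimpleGraph.Adj.reachable
      (show (Ggraph t r).Adj (Sum.inl (c,a)) (Sum.inl (c,b)) from
        (Gadj_inl_inl c c a b).mpr ⟨rfl, hab⟩)
  by_cases hne : u = v
  · subst hne
    exact SimpleGraph.Reachable.refl _
  · by_cases hadj : (Hgraph t r).Adj u v
    · exact step u v hu hv hadj
    · obtain ⟨w, hwA, h1, h2⟩ := exists_mid ht h5 hne hadj
      have hw : Sum.inl (c,w) ∈ Kᶜ := hwA
      exact (step u w hu hw h1).trans (step w v hw hv h2)

end Aux

/-- For `1 ≤ t < r`, the graph `G` built from `2r+1` copies of the complement `H` of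
`C_{2t+1} + (r−t+1)K₂` together with a set `T` of `2t+1` new vertices matched into the
deleted cycle of each copy is `(2r+1)`-regular and `(2t+1)`-connected. -/
theorem Ggraph_regular_and_connected (t r : ℕ) (ht : 1 ≤ t) (htr : t < r) :
    (∀ v : GVert t r, (Ggraph t r).degree v = 2 * r + 1) ∧
    (Ggraph t r).IsMConnected (2 * t + 1) := by
  constructor
  · intro v
    match v with
    | Sum.inl (c, Sum.inl i) => exact Gdeg_inl_inl ht htr c i
    | Sum.inl (c, Sum.inr p) => exact Gdeg_inl_inr ht htr c p
    | Sum.inr j => exact Gdeg_inr ht htr j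
  constructor
  · -- 2t+1 < card
    have hcard : Fintype.card (GVert t r) =
        (2*r+1) * (2*t+1 + (r-t+1)*2) + (2*t+1) := by
      simp [Fintype.card_sum, Fintype.card_prod]
    rw [hcard]
    have h1 : 0 < (2*r+1) * (2*t+1 + (r-t+1)*2) := by positivity
    omega
  · intro K hKlt
    have hK : K.ncard ≤ 2*t := by omega
    -- an untouched copy
    obtain ⟨c0, hc0⟩ : ∃ c0 : Fin (2*r+1), ∀ u : HVert t r, Sum.inl (c0, u) ∉ K := by
      set g : GVert t r → Fin (2*r+1) := fun x =>
        match x with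
        | Sum.inl (c, _) => c
        | Sum.inr _ => ⟨0, by omega⟩ with hg
      have hsub : {c : Fin (2*r+1) | ∃ u : HVert t r, Sum.inl (c, u) ∈ K} ⊆ g '' K := by
        rintro c ⟨u, hu⟩
        exact ⟨Sum.inl (c, u), hu, rfl⟩
      have hle : ({c : Fin (2*r+1) | ∃ u : HVert t r, Sum.inl (c, u) ∈ K}).ncard < 2*r+1 := by
        have := Set.ncard_le_ncard hsub (Set.toFinite _)
        have := Set.ncard_image_le (f := g) (Set.toFinite K)
        omega
      obtain ⟨c0, hc0⟩ := exists_notMem_of_ncard_lt _ (by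
        rw [Fintype.card_fin]; exact hle)
      exact ⟨c0, fun u hu => hc0 ⟨u, hu⟩⟩
    -- for each copy, a good matching index
    have hjc : ∀ c : Fin (2*r+1), ∃ j : Fin (2*t+1),
        (Sum.inr j : GVert t r) ∉ K ∧ Sum.inl (c, Sum.inl j) ∉ K := by
      intro c
      set g : GVert t r → Fin (2*t+1) := fun x =>
        match x with
        | Sum.inl (_, Sum.inl j) => j
        | Sum.inl (_, Sum.inr _) => ⟨0, by omega⟩
        | Sum.inr j => j with hg
      have hsub : {j : Fin (2*t+1) | (Sum.inr j : GVert t r) ∈ K ∨ Sum.inl (c, Sum.inl j) ∈ K}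
          ⊆ g '' K := by
        rintro j (hj | hj)
        · exact ⟨Sum.inr j, hj, rfl⟩
        · exact ⟨Sum.inl (c, Sum.inl j), hj, rfl⟩
      have hle : ({j : Fin (2*t+1) | (Sum.inr j : GVert t r) ∈ K ∨
          Sum.inl (c, Sum.inl j) ∈ K}).ncard < 2*t+1 := by
        have := Set.ncard_le_ncard hsub (Set.toFinite _)
        have := Set.ncard_image_le (f := g) (Set.toFinite K)
        omega
      obtain ⟨j, hj⟩ := exists_notMem_of_ncard_lt _ (by
        rw [Fintype.card_fin]; exact hle)
      simp only [Set.mem_setOf_eq, not_or] at hj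
      exact ⟨j, hj.1, hj.2⟩
    obtain ⟨j0, hj0T, _⟩ := hjc c0
    have hanchor : (Sum.inl (c0, Sum.inl j0) : GVert t r) ∈ Kᶜ := hc0 _
    -- every surviving vertex reaches the anchor
    have key : ∀ (x : GVert t r) (hx : x ∈ Kᶜ),
        ((Ggraph t r).induce Kᶜ).Reachable ⟨x, hx⟩ ⟨Sum.inl (c0, Sum.inl j0), hanchor⟩ := by
      intro x hx
      match x with
      | Sum.inr j =>
        have hstep : ((Ggraph t r).induce Kᶜ).Adj ⟨Sum.inr j, hx⟩
            ⟨Sum.inl (c0, Sum.inl j), hc0 _⟩ :=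
          (Gadj_inr_inl c0 (Sum.inl j) j).mpr rfl
        exact (SimpleGraph.Adj.reachable hstep).trans
          (reach_in_copy ht htr K hK c0 (Sum.inl j) (Sum.inl j0) (hc0 _) (hc0 _))
      | Sum.inl (c, u) =>
        obtain ⟨j, hjT, hjc'⟩ := hjc c
        have hr1 := reach_in_copy ht htr K hK c u (Sum.inl j) hx hjc'
        have hstep1 : ((Ggraph t r).induce Kᶜ).Adj ⟨Sum.inl (c, Sum.inl j), hjc'⟩
            ⟨Sum.inr j, hjT⟩ :=
          (Gadj_inl_inr c (Sum.inl j) j).mpr rfl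
        have hstep2 : ((Ggraph t r).induce Kᶜ).Adj ⟨Sum.inr j, hjT⟩
            ⟨Sum.inl (c0, Sum.inl j), hc0 _⟩ :=
          (Gadj_inr_inl c0 (Sum.inl j) j).mpr rfl
        exact hr1.trans ((SimpleGraph.Adj.reachable hstep1).trans
          ((SimpleGraph.Adj.reachable hstep2).trans
            (reach_in_copy ht htr K hK c0 (Sum.inl j) (Sum.inl j0) (hc0 _) (hc0 _))))
    rw [SimpleGraph.connected_iff]
    refine ⟨?_, ⟨⟨Sum.inl (c0, Sum.inl j0), hanchor⟩⟩⟩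
    rintro ⟨x, hx⟩ ⟨y, hy⟩
    exact (key x hx).trans (key y hy).symm
end
end

section
/- For integers t, r, k with 1 ≤ t < r and k > t(2r+1)/(2t+1), let H be the complement of the disjoint union of a cycle C_{2t+1} and r−t+1 copies of K_2, and let G be the simple graph formed from the disjoint union of 2r+1 copies of H together with an additional independent set T of 2t+1 new vertices, by adding, for each copy of H, a perfect matching between T and the 2t+1 vertices of that copy that came from the deleted cycle. Then G has no 2k-factor. -/
open scoped Classical
noncomputable section


lemma even_double_sum {α : Type*} [DecidableEq α] (f : α → α → ℕ)
    (hsym : ∀ a b, f a b = f b a) (hdiag : ∀ a, f a a = 0) (s : Finset α) :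
    Even (∑ a ∈ s, ∑ b ∈ s, f a b) := by
  induction s using Finset.induction_on with
  | empty => simp
  | @insert a s ha ih =>
    have h1 : ∑ x ∈ insert a s, ∑ b ∈ insert a s, f x b
        = f a a + ∑ b ∈ s, f a b + (∑ x ∈ s, f x a + ∑ x ∈ s, ∑ b ∈ s, f x b) := by
      rw [Finset.sum_insert ha]
      simp only [Finset.sum_insert ha]
      rw [Finset.sum_add_distrib]
    rw [h1, hdiag]
    have h2 : ∑ x ∈ s, f x a = ∑ b ∈ s, f a b :=
      Finset.sum_congr rfl (fun x _ => hsym x a)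
    rw [h2]
    obtain ⟨d, hd⟩ := ih
    exact ⟨∑ b ∈ s, f a b + d, by omega⟩


/-- For `1 ≤ t < r` and `k > t(2r+1)/(2t+1)`, the graph `G` built from `2r+1` copies of
the complement `H` of `C_{2t+1} + (r−t+1)K₂` together with a set `T` of `2t+1` new
vertices matched into the deleted cycle of each copy has no `2k`-factor. -/
theorem Ggraph_no_2k_factor (t r k : ℕ) (ht : 1 ≤ t) (htr : t < r)
    (hk : t * (2 * r + 1) < k * (2 * t + 1)) :
    ¬ ∃ H : SimpleGraph (GVert t r), H ≤ Ggraph t r ∧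
        ∀ v : GVert t r, H.degree v = 2 * k := by
  rintro ⟨F, hle, hdeg⟩
  classical
  -- adjacency facts
  have fact1 : ∀ j j' : Fin (2 * t + 1), ¬ F.Adj (Sum.inr j) (Sum.inr j') := by
    intro j j' h
    have h2 := hle h
    simp [Ggraph, SimpleGraph.fromRel_adj, Grel] at h2
  have fact2 : ∀ (j : Fin (2 * t + 1)) (c : Fin (2 * r + 1)) (u : HVert t r),
      F.Adj (Sum.inr j) (Sum.inl (c, u)) → u = Sum.inl j := by
    intro j c u h
    have h2 := hle h
    simp [Ggraph, SimpleGraph.fromRel_adj, Grel] at h2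
    exact h2
  have fact3 : ∀ (c c' : Fin (2 * r + 1)) (u u' : HVert t r),
      F.Adj (Sum.inl (c, u)) (Sum.inl (c', u')) → c = c' := by
    intro c c' u u' h
    have h2 := hle h
    simp [Ggraph, SimpleGraph.fromRel_adj, Grel] at h2
    rcases h2.2 with ⟨h3, _⟩ | ⟨h3, _⟩
    · exact h3
    · exact h3.symm
  have fact4 : ∀ (c : Fin (2 * r + 1)) (u : HVert t r) (j : Fin (2 * t + 1)),
      F.Adj (Sum.inl (c, u)) (Sum.inr j) → u = Sum.inl j := by
    intro c u j h
    exact fact2 j c u h.symm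
  -- degree as indicator sum
  have hdegsum : ∀ v : GVert t r,
      ∑ w : GVert t r, (if F.Adj v w then 1 else 0) = 2 * k := by
    intro v
    have hnf : F.neighborFinset v = Finset.univ.filter (fun w => F.Adj v w) := by
      ext w; simp
    have := hdeg v
    rw [← SimpleGraph.card_neighborFinset_eq_degree, hnf, Finset.card_filter] at this
    exact this
  -- e c j : indicator of the matching edge between copy c and T-vertex j
  set e : Fin (2 * r + 1) → Fin (2 * t + 1) → ℕ :=
    fun c j => if F.Adj (Sum.inr j) (Sum.inl (c, Sum.inl j)) then 1 else 0 with he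
  -- T-vertex degrees
  have hT : ∀ j : Fin (2 * t + 1), ∑ c, e c j = 2 * k := by
    intro j
    have h := hdegsum (Sum.inr j)
    rw [Fintype.sum_sum_type] at h
    have hz : ∑ b : Fin (2 * t + 1),
        (if F.Adj (Sum.inr j) (Sum.inr b) then 1 else 0) = 0 := by
      apply Finset.sum_eq_zero
      intro b _
      simp [fact1 j b]
    rw [hz, add_zero, Fintype.sum_prod_type] at h
    have hinner : ∀ c : Fin (2 * r + 1),
        ∑ u : HVert t r, (if F.Adj (Sum.inr j) (Sum.inl (c, u)) then 1 else 0)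
          = e c j := by
      intro c
      rw [he]
      apply Finset.sum_eq_single (Sum.inl j : HVert t r)
      · intro u _ hu
        simp only [ite_eq_right_iff]
        intro hadj
        exact absurd (fact2 j c u hadj) hu
      · intro hmem
        exact absurd (Finset.mem_univ _) hmem
    rw [Finset.sum_congr rfl (fun c _ => hinner c)] at h
    exact h
  -- per-copy bound
  have hC : ∀ c : Fin (2 * r + 1), ∑ j, e c j ≤ 2 * t := by
    intro c
    -- total degree of the copy
    have htot : ∑ u : HVert t r,
        ∑ w : GVert t r, (if F.Adj (Sum.inl (c, u)) w then 1 else 0)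
          = Fintype.card (HVert t r) * (2 * k) := by
      rw [Finset.sum_congr rfl (fun u _ => hdegsum (Sum.inl (c, u)))]
      simp [Finset.card_univ, mul_comm]
    -- decompose each inner sum
    have hdecomp : ∀ u : HVert t r,
        ∑ w : GVert t r, (if F.Adj (Sum.inl (c, u)) w then 1 else 0)
          = (∑ u' : HVert t r,
              (if F.Adj (Sum.inl (c, u)) (Sum.inl (c, u')) then 1 else 0))
            + (∑ j : Fin (2 * t + 1),
              (if F.Adj (Sum.inl (c, u)) (Sum.inr j) then 1 else 0)) := by
      intro u
      rw [Fintype.sum_sum_type, Fintype.sum_prod_type]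
      congr 1
      apply Finset.sum_eq_single c
      · intro c' _ hc'
        apply Finset.sum_eq_zero
        intro u' _
        simp only [ite_eq_right_iff]
        intro hadj
        exact (hc' (fact3 c c' u u' hadj).symm).elim
      · intro hmem
        exact absurd (Finset.mem_univ _) hmem
    -- the T-side part equals e c j at cycle vertices
    have hTside : ∑ u : HVert t r,
        ∑ j : Fin (2 * t + 1), (if F.Adj (Sum.inl (c, u)) (Sum.inr j) then 1 else 0)
          = ∑ j, e c j := by
      rw [Fintype.sum_sum_type]
      have hz : ∑ p : Fin (r - t + 1) × Fin 2,
          ∑ j : Fin (2 * t + 1),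
            (if F.Adj (Sum.inl (c, Sum.inr p)) (Sum.inr j) then 1 else 0) = 0 := by
        apply Finset.sum_eq_zero
        intro p _
        apply Finset.sum_eq_zero
        intro j _
        simp only [ite_eq_right_iff]
        intro hadj
        exact absurd (fact4 c (Sum.inr p) j hadj) (by simp)
      rw [hz, add_zero]
      apply Finset.sum_congr rfl
      intro j0 _
      rw [he]
      have : ∀ j : Fin (2 * t + 1),
          (if F.Adj (Sum.inl (c, Sum.inl j0)) (Sum.inr j) then 1 else 0)
            = if j = j0 then (if F.Adj (Sum.inr j0) (Sum.inl (c, Sum.inl j0)) then 1 else 0) else 0 := by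
        intro j
        by_cases hj : j = j0
        · subst hj
          simp [SimpleGraph.adj_comm]
        · simp only [hj, if_false, ite_eq_right_iff]
          intro hadj
          have := fact4 c (Sum.inl j0) j hadj
          simp only [Sum.inl.injEq] at this
          exact absurd this.symm hj
      rw [Finset.sum_congr rfl (fun j _ => this j)]
      simp
    -- internal part is even
    have hin : Even (∑ u : HVert t r, ∑ u' : HVert t r,
        (if F.Adj (Sum.inl (c, u)) (Sum.inl (c, u')) then 1 else 0)) := by
      apply even_double_sum
      · intro a b
        simp [SimpleGraph.adj_comm]
      · intro a
        simp
    -- so the cross part is even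
    have heq : Fintype.card (HVert t r) * (2 * k)
        = (∑ u : HVert t r, ∑ u' : HVert t r,
            (if F.Adj (Sum.inl (c, u)) (Sum.inl (c, u')) then 1 else 0))
          + ∑ j, e c j := by
      rw [← htot, Finset.sum_congr rfl (fun u _ => hdecomp u), Finset.sum_add_distrib,
        hTside]
    have heven : Even (∑ j, e c j) := by
      have h1 : Even (Fintype.card (HVert t r) * (2 * k)) := ⟨Fintype.card (HVert t r) * k, by ring⟩
      obtain ⟨a, ha⟩ := h1
      obtain ⟨b, hb⟩ := hin
      refine ⟨a - b, ?_⟩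
      omega
    have hle' : ∑ j, e c j ≤ 2 * t + 1 := by
      calc ∑ j, e c j ≤ ∑ _j : Fin (2 * t + 1), 1 := by
            apply Finset.sum_le_sum
            intro j _
            simp only [he]
            split <;> omega
        _ = 2 * t + 1 := by simp
    obtain ⟨a, ha⟩ := heven
    omega
  -- combine
  have htotal : (2 * t + 1) * (2 * k) = ∑ c, ∑ j, e c j := by
    rw [Finset.sum_comm]
    rw [Finset.sum_congr rfl (fun j _ => hT j)]
    simp [mul_comm]
  have hbound : ∑ c, ∑ j, e c j ≤ (2 * r + 1) * (2 * t) := by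
    calc ∑ c, ∑ j, e c j ≤ ∑ _c : Fin (2 * r + 1), 2 * t :=
          Finset.sum_le_sum (fun c _ => hC c)
      _ = (2 * r + 1) * (2 * t) := by simp [mul_comm]
  rw [← htotal] at hbound
  nlinarith
end
end
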